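/- arXiv:2204.08382 — 8 statements merged into one kernel-verified Lean document; each statement's English description precedes it below -/
import Mathlib

section
/- Let X ∈ ℝ^{M×N} with all entries nonnegative, H ∈ ℝ^{K×N} with all entries positive, and S^t ∈ ℝ^{M×K} with all entries positive. Define ξ_{ijl} = S^t_{il} H_{lj} / (S^t H)_{ij} and f₁(S, S^t) = Σ_{i,j,l} ξ_{ijl} (X_{ij} − S_{il} H_{lj} / ξ_{ijl})². Then for every S ∈ ℝ^{M×K} with nonnegative entries, f₁(S, S^t) ≥ Σ_{i,j} (X_{ij} − (SH)_{ij})², and f₁(S^t, S^t) = Σ_{i,j} (X_{ij} − (S^t H)_{ij})². That is, f₁(·, S^t) is an auxiliary function for the NMF objective F₁(S) = Σ_{i,j} (X_{ij} − (SH)_{ij})². -/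
/-!
The auxiliary function is Jensen's inequality for the convex map `y ↦ y²`, applied to each
entry `(X i j - ∑ l, S i l * H l j)²` with the weights `ξ i j l`, which are positive and sum
to `1`. At `S = Sᵗ` every point `Sᵗ i l * H l j / ξ i j l` equals `(Sᵗ * H) i j`, so
Jensen's inequality is an equality there.
-/

open Finset Matrix

theorem sq_sub_sum_le_sum_mul_sq_sub_div {ι : Type*} (s : Finset ι) {w : ι → ℝ}
    (hw : ∀ l ∈ s, 0 < w l) (hw₁ : ∑ l ∈ s, w l = 1) (b : ι → ℝ) (x : ℝ) :
    (x - ∑ l ∈ s, b l) ^ 2 ≤ ∑ l ∈ s, w l * (x - b l / w l) ^ 2 := by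
  have hmean : ∑ l ∈ s, w l • (x - b l / w l) = x - ∑ l ∈ s, b l := by
    simp only [smul_eq_mul, mul_sub, sum_sub_distrib, ← sum_mul, hw₁, one_mul]
    congr 1
    exact sum_congr rfl fun l hl => mul_div_cancel₀ _ (hw l hl).ne'
  rw [← hmean]
  exact (even_two.convexOn_pow (𝕜 := ℝ)).map_sum_le (fun l hl => (hw l hl).le) hw₁
    fun _ _ => Set.mem_univ _

theorem Matrix.mul_apply_pos {m n o R : Type*} [Fintype n] [Nonempty n] [Semiring R]
    [PartialOrder R] [IsStrictOrderedRing R] {A : Matrix m n R} {B : Matrix n o R}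
    (hA : ∀ i l, 0 < A i l) (hB : ∀ l j, 0 < B l j) (i : m) (j : o) : 0 < (A * B) i j := by
  rw [mul_apply]
  exact sum_pos (fun l _ => mul_pos (hA i l) (hB l j)) univ_nonempty

theorem Matrix.sum_mul_div_mul_apply {m n o R : Type*} [Fintype n] [DivisionSemiring R]
    {A : Matrix m n R} {B : Matrix n o R} {i : m} {j : o} (h : (A * B) i j ≠ 0) :
    ∑ l, A i l * B l j / (A * B) i j = 1 := by
  rw [← sum_div, ← mul_apply, div_self h]

theorem nmf_auxiliary_function_general {M N K : ℕ} (hK : 0 < K)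
    (X : Matrix (Fin M) (Fin N) ℝ)
    (H : Matrix (Fin K) (Fin N) ℝ) (hH : ∀ l j, 0 < H l j)
    (St : Matrix (Fin M) (Fin K) ℝ) (hSt : ∀ i l, 0 < St i l) :
    (∀ S : Matrix (Fin M) (Fin K) ℝ, (∀ i l, 0 ≤ S i l) →
      ∑ i, ∑ j, (X i j - (S * H) i j) ^ 2 ≤
        ∑ i, ∑ j, ∑ l, (St i l * H l j / (St * H) i j) *
          (X i j - S i l * H l j / (St i l * H l j / (St * H) i j)) ^ 2) ∧
    (∑ i, ∑ j, ∑ l, (St i l * H l j / (St * H) i j) *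
        (X i j - St i l * H l j / (St i l * H l j / (St * H) i j)) ^ 2 =
      ∑ i, ∑ j, (X i j - (St * H) i j) ^ 2) := by
  have : Nonempty (Fin K) := Fin.pos_iff_nonempty.mp hK
  have hStH := mul_apply_pos hSt hH
  have hξ (i j l) : 0 < St i l * H l j / (St * H) i j :=
    div_pos (mul_pos (hSt i l) (hH l j)) (hStH i j)
  have hξ₁ (i j) := sum_mul_div_mul_apply (hStH i j).ne'
  refine ⟨fun S _ => sum_le_sum fun i _ => sum_le_sum fun j _ => ?_,
    sum_congr rfl fun i _ => sum_congr rfl fun j _ => ?_⟩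
  · rw [mul_apply]
    exact sq_sub_sum_le_sum_mul_sq_sub_div _ (fun l _ => hξ i j l) (hξ₁ i j) _ _
  · rw [sum_congr rfl fun l _ => by rw [div_div_cancel₀ (mul_pos (hSt i l) (hH l j)).ne'],
      ← sum_mul, hξ₁, one_mul]

/-- `f₁(·, Sᵗ)` built from `ξ i j l = Sᵗ i l * H l j / (Sᵗ * H) i j` is an auxiliary
function for the NMF objective `F₁ S = ∑ i j, (X i j - (S * H) i j)²`: it dominates `F₁`
on nonnegative matrices and agrees with `F₁` at `S = Sᵗ`. -/
theorem nmf_auxiliary_function {M N K : ℕ} (hK : 0 < K)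
    (X : Matrix (Fin M) (Fin N) ℝ) (hX : ∀ i j, 0 ≤ X i j)
    (H : Matrix (Fin K) (Fin N) ℝ) (hH : ∀ l j, 0 < H l j)
    (St : Matrix (Fin M) (Fin K) ℝ) (hSt : ∀ i l, 0 < St i l) :
    (∀ S : Matrix (Fin M) (Fin K) ℝ, (∀ i l, 0 ≤ S i l) →
      ∑ i, ∑ j, (X i j - (S * H) i j) ^ 2 ≤
        ∑ i, ∑ j, ∑ l, (St i l * H l j / (St * H) i j) *
          (X i j - S i l * H l j / (St i l * H l j / (St * H) i j)) ^ 2) ∧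
    (∑ i, ∑ j, ∑ l, (St i l * H l j / (St * H) i j) *
        (X i j - St i l * H l j / (St i l * H l j / (St * H) i j)) ^ 2 =
      ∑ i, ∑ j, (X i j - (St * H) i j) ^ 2) :=
  nmf_auxiliary_function_general hK X H hH St hSt
end

section
/- Let X ∈ ℝ^{M×N} with all entries nonnegative, H ∈ ℝ^{K×N} with all entries positive, and S ∈ ℝ^{M×K} with all entries positive. Define the multiplicative update S'_{il} = S_{il} (X Hᵀ)_{il} / (S H Hᵀ)_{il}. Then Σ_{i,j} (X_{ij} − (S'H)_{ij})² ≤ Σ_{i,j} (X_{ij} − (SH)_{ij})², i.e., the NMF objective does not increase under the multiplicative update of S. -/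
/-!
Lee–Seung auxiliary-function argument, row by row. For a row `s` of `S`, put `A = H Hᵀ` and
`g = H x - A s` (a row of `X Hᵀ - S H Hᵀ`). Writing the update as `s + d`, the row objective
changes by `-2 d ⬝ᵥ g + d ⬝ᵥ A d`. Since `A` is symmetric with nonnegative entries and `s > 0`,
the quadratic term is dominated by the diagonal form `∑ l, (A s)_l / s_l * d_l ^ 2`, and the
multiplicative step is exactly the one for which `(A s)_l / s_l * d_l = g_l`. The diagonal form
then equals `d ⬝ᵥ g = ∑ l, s_l g_l ^ 2 / (A s)_l ≥ 0`, so the objective drops by at least `d ⬝ᵥ g`.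
-/

open Finset Matrix

section LeeSeung

variable {ι κ : Type*} [Fintype ι] [Fintype κ]

theorem dotProduct_mulVec_le_sum_mulVec_div_mul_sq {A : Matrix κ κ ℝ} (hA : A.IsSymm)
    (hA₀ : ∀ l m, 0 ≤ A l m) {s : κ → ℝ} (hs : ∀ l, 0 < s l) (d : κ → ℝ) :
    d ⬝ᵥ A *ᵥ d ≤ ∑ l, (A *ᵥ s) l / s l * d l ^ 2 := by
  set f : κ → κ → ℝ := fun l m => A l m * s m / s l * d l ^ 2
  have hf : ∀ l, ∑ m, f l m = (A *ᵥ s) l / s l * d l ^ 2 := fun l => by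
    simp only [f, mulVec, dotProduct, sum_div, sum_mul]
  have hterm : ∀ l m, A l m * s l * s m * (d l / s l - d m / s m) ^ 2
      = f l m + f m l - 2 * (d l * (A l m * d m)) := fun l m => by
    have := (hs l).ne'
    have := (hs m).ne'
    simp only [f, hA.apply l m]
    field_simp
    ring
  have hquad : ∑ l, ∑ m, 2 * (d l * (A l m * d m)) = 2 * d ⬝ᵥ A *ᵥ d := by
    simp only [dotProduct, mulVec, mul_sum]
  -- The gap is half a weighted sum of squares: substitute `d = s ⊙ u` and symmetrize.
  have hsq : ∑ l, ∑ m, A l m * s l * s m * (d l / s l - d m / s m) ^ 2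
      = 2 * (∑ l, (A *ᵥ s) l / s l * d l ^ 2 - d ⬝ᵥ A *ᵥ d) := by
    simp only [hterm, sum_sub_distrib, sum_add_distrib]
    rw [sum_comm (f := fun l m => f m l), hquad]
    simp only [hf]
    ring
  have : 0 ≤ ∑ l, ∑ m, A l m * s l * s m * (d l / s l - d m / s m) ^ 2 :=
    sum_nonneg fun l _ => sum_nonneg fun m _ =>
      mul_nonneg (mul_nonneg (mul_nonneg (hA₀ l m) (hs l).le) (hs m).le) (sq_nonneg _)
  linarith

theorem dotProduct_mulVec_le_two_mul_dotProduct_sub_mulVec {A : Matrix κ κ ℝ} (hA : A.IsSymm)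
    (hA₀ : ∀ l m, 0 ≤ A l m) {s : κ → ℝ} (hs : ∀ l, 0 < s l) (hAs : ∀ l, 0 < (A *ᵥ s) l)
    (b d : κ → ℝ) (hd : ∀ l, d l = s l * (b l - (A *ᵥ s) l) / (A *ᵥ s) l) :
    d ⬝ᵥ A *ᵥ d ≤ 2 * (d ⬝ᵥ (b - A *ᵥ s)) := by
  have hmajorant : ∑ l, (A *ᵥ s) l / s l * d l ^ 2 = d ⬝ᵥ (b - A *ᵥ s) := by
    refine sum_congr rfl fun l _ => ?_
    have := (hs l).ne'
    have := (hAs l).ne'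
    rw [hd l, Pi.sub_apply]
    field_simp
  have : 0 ≤ ∑ l, (A *ᵥ s) l / s l * d l ^ 2 :=
    sum_nonneg fun l _ => mul_nonneg (div_pos (hAs l) (hs l)).le (sq_nonneg _)
  linarith [dotProduct_mulVec_le_sum_mulVec_div_mul_sq hA hA₀ hs d]

theorem sub_add_vecMul_dotProduct_self (x : ι → ℝ) (H : Matrix κ ι ℝ) (s d : κ → ℝ) :
    (x - (s + d) ᵥ* H) ⬝ᵥ (x - (s + d) ᵥ* H)
      = (x - s ᵥ* H) ⬝ᵥ (x - s ᵥ* H) - 2 * (d ⬝ᵥ (H *ᵥ x - (H * Hᵀ) *ᵥ s))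
        + d ⬝ᵥ (H * Hᵀ) *ᵥ d := by
  set r := x - s ᵥ* H
  have hres : x - (s + d) ᵥ* H = r - d ᵥ* H := by rw [add_vecMul, sub_add_eq_sub_sub]
  have hcross : r ⬝ᵥ d ᵥ* H = d ⬝ᵥ (H *ᵥ x - (H * Hᵀ) *ᵥ s) := by
    rw [dotProduct_comm, ← dotProduct_mulVec, mulVec_sub, ← mulVec_mulVec, mulVec_transpose]
  have hsq : d ᵥ* H ⬝ᵥ d ᵥ* H = d ⬝ᵥ (H * Hᵀ) *ᵥ d := by
    rw [← dotProduct_mulVec, ← mulVec_mulVec, mulVec_transpose]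
  rw [hres, sub_dotProduct, dotProduct_sub r r, dotProduct_sub (d ᵥ* H) r,
    dotProduct_comm (d ᵥ* H) r, hsq, hcross]
  ring

theorem dotProduct_self_sub_vecMul_le_of_multiplicative_update (x : ι → ℝ) {H : Matrix κ ι ℝ}
    (hH : ∀ l j, 0 ≤ H l j) {s : κ → ℝ} (hs : ∀ l, 0 < s l) (hHs : ∀ l, 0 < ((H * Hᵀ) *ᵥ s) l)
    (s' : κ → ℝ) (hs' : ∀ l, s' l = s l * (H *ᵥ x) l / ((H * Hᵀ) *ᵥ s) l) :
    (x - s' ᵥ* H) ⬝ᵥ (x - s' ᵥ* H) ≤ (x - s ᵥ* H) ⬝ᵥ (x - s ᵥ* H) := by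
  have hHH₀ : ∀ l m, 0 ≤ (H * Hᵀ) l m := fun l m =>
    sum_nonneg fun j _ => mul_nonneg (hH l j) (hH m j)
  have hHH : (H * Hᵀ).IsSymm := by rw [IsSymm, transpose_mul, transpose_transpose]
  have hstep := dotProduct_mulVec_le_two_mul_dotProduct_sub_mulVec hHH
    hHH₀ hs hHs (H *ᵥ x) (s' - s) fun l => by
      have := (hHs l).ne'
      rw [Pi.sub_apply, hs' l]
      field_simp
  rw [← add_sub_cancel s s', sub_add_vecMul_dotProduct_self]
  linarith

theorem mul_transpose_mulVec_pos [Nonempty ι] {H : Matrix κ ι ℝ} (hH : ∀ l j, 0 < H l j)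
    {s : κ → ℝ} (hs : ∀ l, 0 < s l) (l : κ) : 0 < ((H * Hᵀ) *ᵥ s) l :=
  sum_pos (fun m _ => mul_pos (sum_pos (fun j _ => mul_pos (hH l j) (hH m j)) univ_nonempty)
    (hs m)) ⟨l, mem_univ l⟩

end LeeSeung

theorem nmf_S_update_monotone_general {M N K : ℕ}
    (X : Matrix (Fin M) (Fin N) ℝ)
    (H : Matrix (Fin K) (Fin N) ℝ) (hH : ∀ l j, 0 < H l j)
    (S : Matrix (Fin M) (Fin K) ℝ) (hS : ∀ i l, 0 < S i l)
    (S' : Matrix (Fin M) (Fin K) ℝ)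
    (hS' : ∀ i l, S' i l = S i l * (X * Hᵀ) i l / (S * H * Hᵀ) i l) :
    ∑ i, ∑ j, (X i j - (S' * H) i j) ^ 2 ≤ ∑ i, ∑ j, (X i j - (S * H) i j) ^ 2 := by
  obtain _ | _ := isEmpty_or_nonempty (Fin N)
  · simp
  have hXH : ∀ i l, (X * Hᵀ) i l = (H *ᵥ X i) l := fun i l => by
    rw [← vecMul_transpose]
    rfl
  have hSHH : ∀ i l, (S * H * Hᵀ) i l = ((H * Hᵀ) *ᵥ S i) l := fun i l => by
    rw [← vecMul_transpose, transpose_mul, transpose_transpose, Matrix.mul_assoc]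
    rfl
  have hobj : ∀ (T : Matrix (Fin M) (Fin K) ℝ) i,
      ∑ j, (X i j - (T * H) i j) ^ 2 = (X i - T i ᵥ* H) ⬝ᵥ (X i - T i ᵥ* H) := fun T i => by
    simp only [dotProduct, sq]
    rfl
  refine sum_le_sum fun i _ => ?_
  rw [hobj, hobj]
  exact dotProduct_self_sub_vecMul_le_of_multiplicative_update (X i) (fun l j => (hH l j).le)
    (hS i) (mul_transpose_mulVec_pos hH (hS i)) (S' i) fun l => by
      rw [hS' i l, hXH, hSHH]

/-- The NMF objective does not increase under the Lee–Seung multiplicative update of `S`: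
`S' i l = S i l * (X * Hᵀ) i l / (S * H * Hᵀ) i l`. -/
theorem nmf_S_update_monotone {M N K : ℕ}
    (X : Matrix (Fin M) (Fin N) ℝ) (hX : ∀ i j, 0 ≤ X i j)
    (H : Matrix (Fin K) (Fin N) ℝ) (hH : ∀ l j, 0 < H l j)
    (S : Matrix (Fin M) (Fin K) ℝ) (hS : ∀ i l, 0 < S i l)
    (S' : Matrix (Fin M) (Fin K) ℝ)
    (hS' : ∀ i l, S' i l = S i l * (X * Hᵀ) i l / (S * H * Hᵀ) i l) :
    ∑ i, ∑ j, (X i j - (S' * H) i j) ^ 2 ≤ ∑ i, ∑ j, (X i j - (S * H) i j) ^ 2 :=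
  nmf_S_update_monotone_general X H hH S hS S' hS'
end

section
/- Let X ∈ ℝ^{M×N} with all entries nonnegative, S ∈ ℝ^{M×K} with all entries positive, and H ∈ ℝ^{K×N} with all entries positive. Define the multiplicative update H'_{lj} = H_{lj} (Sᵀ X)_{lj} / (Sᵀ S H)_{lj}. Then Σ_{i,j} (X_{ij} − (SH')_{ij})² ≤ Σ_{i,j} (X_{ij} − (SH)_{ij})², i.e., the NMF objective does not increase under the multiplicative update of H. -/
/-!
Column by column, write the update as `h + δ` with `δ = h * u`, `u = (a - b) / b`, `a = Sᵀ x`,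
`b = SᵀS h`. Expanding `‖x - S (h + δ)‖²`, the linear term is `-2 ∑ b h u²`, while the quadratic
term `δᵀ SᵀS δ` is at most `∑ b h u²`, because `diag (SᵀS h / h)` dominates the nonnegative
symmetric matrix `SᵀS`. So the objective drops by at least `∑ b h u² ≥ 0`.
-/

open Finset Matrix

section

variable {ι κ : Type*} [Fintype ι] [Fintype κ]

noncomputable def leeSeungUpdate (S : Matrix ι κ ℝ) (x : ι → ℝ) (h : κ → ℝ) : κ → ℝ :=
  fun l => h l * (Sᵀ *ᵥ x) l / ((Sᵀ * S) *ᵥ h) l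

lemma sum_sq_sub_mulVec_add (S : Matrix ι κ ℝ) (x : ι → ℝ) (v δ : κ → ℝ) :
    ∑ i, (x i - (S *ᵥ (v + δ)) i) ^ 2 =
      ∑ i, (x i - (S *ᵥ v) i) ^ 2 - 2 * ((Sᵀ *ᵥ (x - S *ᵥ v)) ⬝ᵥ δ)
        + δ ⬝ᵥ ((Sᵀ * S) *ᵥ δ) := by
  set r := x - S *ᵥ v
  have hcross : (Sᵀ *ᵥ r) ⬝ᵥ δ = r ⬝ᵥ (S *ᵥ δ) := by
    rw [dotProduct_mulVec, mulVec_transpose]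
  have hquad : δ ⬝ᵥ ((Sᵀ * S) *ᵥ δ) = (S *ᵥ δ) ⬝ᵥ (S *ᵥ δ) := by
    rw [← mulVec_mulVec, dotProduct_mulVec, vecMul_transpose]
  have hpoint : ∀ i, (x i - (S *ᵥ (v + δ)) i) ^ 2
      = r i ^ 2 - 2 * (r i * (S *ᵥ δ) i) + (S *ᵥ δ) i * (S *ᵥ δ) i := by
    intro i
    simp only [r, mulVec_add, Pi.add_apply, Pi.sub_apply]
    ring
  rw [hcross, hquad]
  simp only [hpoint, dotProduct, sum_add_distrib, sum_sub_distrib, mul_sum]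
  rfl

/-- `diag (Q h / h) - Q` is positive semidefinite, stated for `δ = h * u` to avoid division. -/
lemma mul_dotProduct_mulVec_mul_le {Q : Matrix κ κ ℝ} (hQ : Qᵀ = Q) (hQ₀ : ∀ l m, 0 ≤ Q l m)
    {h : κ → ℝ} (hh : ∀ l, 0 ≤ h l) (u : κ → ℝ) :
    (h * u) ⬝ᵥ (Q *ᵥ (h * u)) ≤ ∑ l, (Q *ᵥ h) l * h l * u l ^ 2 := by
  have hsymm : ∀ l m, Q m l = Q l m := fun l m => by rw [← transpose_apply Q l m, hQ]
  have hweight : ∀ l m, 0 ≤ Q l m * h l * h m := fun l m =>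
    mul_nonneg (mul_nonneg (hQ₀ l m) (hh l)) (hh m)
  suffices 2 * ((h * u) ⬝ᵥ (Q *ᵥ (h * u))) ≤ 2 * ∑ l, (Q *ᵥ h) l * h l * u l ^ 2 by linarith
  calc 2 * ((h * u) ⬝ᵥ (Q *ᵥ (h * u)))
      = ∑ l, ∑ m, Q l m * h l * h m * (2 * u l * u m) := by
        simp only [dotProduct, mulVec, mul_sum, Pi.mul_apply]
        exact sum_congr rfl fun l _ => sum_congr rfl fun m _ => by ring
    _ ≤ ∑ l, ∑ m, Q l m * h l * h m * (u l ^ 2 + u m ^ 2) := by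
        gcongr with l _ m _
        · exact hweight l m
        · exact two_mul_le_add_sq _ _
    _ = ∑ l, ∑ m, Q l m * h l * h m * u l ^ 2 + ∑ m, ∑ l, Q l m * h l * h m * u m ^ 2 := by
        simp only [mul_add, sum_add_distrib]
        exact congrArg _ sum_comm
    _ = 2 * ∑ l, (Q *ᵥ h) l * h l * u l ^ 2 := by
        simp only [mulVec, dotProduct, sum_mul, mul_sum]
        rw [← sum_add_distrib]
        exact sum_congr rfl fun m _ => by
          rw [← sum_add_distrib]
          exact sum_congr rfl fun l _ => by rw [hsymm]; ring

theorem sum_sq_sub_mulVec_leeSeungUpdate_le (S : Matrix ι κ ℝ) (hS : ∀ i l, 0 ≤ S i l)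
    (x : ι → ℝ) {h : κ → ℝ} (hh : ∀ l, 0 ≤ h l) (hb : ∀ l, 0 < ((Sᵀ * S) *ᵥ h) l) :
    ∑ i, (x i - (S *ᵥ leeSeungUpdate S x h) i) ^ 2 ≤ ∑ i, (x i - (S *ᵥ h) i) ^ 2 := by
  set a := Sᵀ *ᵥ x
  set b := (Sᵀ * S) *ᵥ h
  set u : κ → ℝ := fun l => (a l - b l) / b l
  have hgrad : Sᵀ *ᵥ (x - S *ᵥ h) = b * u := by
    funext l
    simp only [mulVec_sub, mulVec_mulVec, Pi.sub_apply, Pi.mul_apply, u]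
    field_simp [(hb l).ne']
    rfl
  have hupdate : leeSeungUpdate S x h = h + h * u := by
    funext l
    show h l * a l / b l = h l + h l * ((a l - b l) / b l)
    field_simp [(hb l).ne']
    ring
  have hQ : (Sᵀ * S)ᵀ = Sᵀ * S := by rw [transpose_mul, transpose_transpose]
  have hQ₀ : ∀ l m, 0 ≤ (Sᵀ * S) l m := fun l m =>
    sum_nonneg fun i _ => mul_nonneg (hS i l) (hS i m)
  have hquad := mul_dotProduct_mulVec_mul_le hQ hQ₀ hh u
  have hlin : (b * u) ⬝ᵥ (h * u) = ∑ l, b l * h l * u l ^ 2 :=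
    sum_congr rfl fun l _ => by simp only [Pi.mul_apply]; ring
  have hdescent : 0 ≤ ∑ l, b l * h l * u l ^ 2 :=
    sum_nonneg fun l _ => mul_nonneg (mul_nonneg (hb l).le (hh l)) (sq_nonneg _)
  rw [hupdate, sum_sq_sub_mulVec_add, hgrad, hlin]
  linarith

end

theorem nmf_H_update_monotone_general {M N K : ℕ}
    (X : Matrix (Fin M) (Fin N) ℝ)
    (S : Matrix (Fin M) (Fin K) ℝ) (hS : ∀ i l, 0 < S i l)
    (H : Matrix (Fin K) (Fin N) ℝ) (hH : ∀ l j, 0 < H l j)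
    (H' : Matrix (Fin K) (Fin N) ℝ)
    (hH' : ∀ l j, H' l j = H l j * (Sᵀ * X) l j / (Sᵀ * S * H) l j) :
    ∑ i, ∑ j, (X i j - (S * H') i j) ^ 2 ≤ ∑ i, ∑ j, (X i j - (S * H) i j) ^ 2 := by
  rcases isEmpty_or_nonempty (Fin M) with hM | hM
  · simp
  have hcol : ∀ j, (fun l => H' l j) = leeSeungUpdate S (fun i => X i j) (fun l => H l j) :=
    fun j => funext fun l => hH' l j
  have hb : ∀ j l, 0 < ((Sᵀ * S) *ᵥ fun l => H l j) l := fun j l =>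
    sum_pos (fun m _ => mul_pos (sum_pos (fun i _ => mul_pos (hS i l) (hS i m)) univ_nonempty)
      (hH m j)) ⟨l, mem_univ l⟩
  rw [sum_comm, sum_comm (f := fun i j => (X i j - (S * H) i j) ^ 2)]
  refine sum_le_sum fun j _ => ?_
  have := sum_sq_sub_mulVec_leeSeungUpdate_le S (fun i l => (hS i l).le) (fun i => X i j)
    (fun l => (hH l j).le) (hb j)
  rwa [← hcol] at this

/-- The NMF objective does not increase under the Lee–Seung multiplicative update of `H`:
`H' l j = H l j * (Sᵀ * X) l j / (Sᵀ * S * H) l j`. -/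
theorem nmf_H_update_monotone {M N K : ℕ}
    (X : Matrix (Fin M) (Fin N) ℝ) (hX : ∀ i j, 0 ≤ X i j)
    (S : Matrix (Fin M) (Fin K) ℝ) (hS : ∀ i l, 0 < S i l)
    (H : Matrix (Fin K) (Fin N) ℝ) (hH : ∀ l j, 0 < H l j)
    (H' : Matrix (Fin K) (Fin N) ℝ)
    (hH' : ∀ l j, H' l j = H l j * (Sᵀ * X) l j / (Sᵀ * S * H) l j) :
    ∑ i, ∑ j, (X i j - (S * H') i j) ^ 2 ≤ ∑ i, ∑ j, (X i j - (S * H) i j) ^ 2 :=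
  nmf_H_update_monotone_general X S hS H hH H' hH'
end

section
/- Let X ∈ ℝ^{M×N} with all entries nonnegative, H ∈ ℝ^{K×N} with all entries positive, S ∈ ℝ^{M×K} with all entries positive, and let v : Fin M → ℝ with v_i ≥ 0 for all i. Define the multiplicative update S'_{il} = S_{il} (X Hᵀ)_{il} / (S H Hᵀ)_{il}. Then Σ_i v_i Σ_j (X_{ij} − (S'H)_{ij})² ≤ Σ_i v_i Σ_j (X_{ij} − (SH)_{ij})², i.e., the feature-weighted NMF objective does not increase under the (weight-independent) multiplicative update of S. -/
open Finset Matrix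

private lemma sym_sum_nonneg {K : ℕ} (g : Fin K → Fin K → ℝ)
    (h : ∀ l m, 0 ≤ g l m + g m l) : 0 ≤ ∑ l, ∑ m, g l m := by
  have key : 0 ≤ ∑ l, ∑ m, (g l m + g m l) :=
    Finset.sum_nonneg fun l _ => Finset.sum_nonneg fun m _ => h l m
  have e : ∑ l, ∑ m, (g l m + g m l)
      = (∑ l, ∑ m, g l m) + (∑ l, ∑ m, g l m) := by
    calc ∑ l, ∑ m, (g l m + g m l)
        = (∑ l, ∑ m, g l m) + (∑ l, ∑ m, g m l) := by
          simp [Finset.sum_add_distrib]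
      _ = (∑ l, ∑ m, g l m) + (∑ l, ∑ m, g l m) := by
          rw [Finset.sum_comm]
  linarith [e ▸ key]

private lemma row_key {N K : ℕ} (x : Fin N → ℝ)
    (H : Matrix (Fin K) (Fin N) ℝ) (hH : ∀ l j, 0 < H l j)
    (s s' : Fin K → ℝ) (hs : ∀ l, 0 < s l)
    (hs' : ∀ l, s' l = s l * (∑ j, x j * H l j) /
      (∑ j, (∑ m, s m * H m j) * H l j)) :
    ∑ j, (x j - ∑ l, s' l * H l j) ^ 2 ≤ ∑ j, (x j - ∑ l, s l * H l j) ^ 2 := by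
  rcases Nat.eq_zero_or_pos N with hN | hN
  · subst hN; simp
  set a : Fin K → Fin K → ℝ := fun l m => ∑ j, H l j * H m j with ha
  set b : Fin K → ℝ := fun l => ∑ j, x j * H l j with hb
  set c : Fin K → ℝ := fun l => ∑ m, s m * a l m with hc
  have hasymm : ∀ l m, a l m = a m l := fun l m => by
    simp only [ha]; exact Finset.sum_congr rfl fun j _ => mul_comm _ _
  have hapos : ∀ l m, 0 < a l m := fun l m =>
    Finset.sum_pos (fun j _ => mul_pos (hH l j) (hH m j))
      (Finset.univ_nonempty_iff.mpr (Fin.pos_iff_nonempty.mp hN))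
  have hcpos : ∀ l, 0 < c l := fun l =>
    Finset.sum_pos (fun m _ => mul_pos (hs m) (hapos l m))
      ⟨l, Finset.mem_univ l⟩
  have hden : ∀ l, (∑ j, (∑ m, s m * H m j) * H l j) = c l := by
    intro l
    calc ∑ j, (∑ m, s m * H m j) * H l j
        = ∑ j, ∑ m, s m * (H l j * H m j) := by
          refine Finset.sum_congr rfl fun j _ => ?_
          rw [Finset.sum_mul]
          exact Finset.sum_congr rfl fun m _ => by ring
      _ = ∑ m, ∑ j, s m * (H l j * H m j) := Finset.sum_comm
      _ = ∑ m, s m * a l m := by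
          refine Finset.sum_congr rfl fun m _ => ?_
          rw [← Finset.mul_sum]
  have hs'2 : ∀ l, s' l = s l * b l / c l := fun l => by
    rw [hs' l, hden l]
  set d : Fin K → ℝ := fun l => s' l - s l with hd
  -- Expansion of the quadratic objective
  have expand : ∀ u : Fin K → ℝ, ∑ j, (x j - ∑ l, u l * H l j) ^ 2
      = (∑ j, (x j) ^ 2) - 2 * (∑ l, u l * b l) + ∑ l, ∑ m, u l * u m * a l m := by
    intro u
    have h1 : ∑ j, x j * (∑ l, u l * H l j) = ∑ l, u l * b l := by
      calc ∑ j, x j * ∑ l, u l * H l j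
          = ∑ j, ∑ l, u l * (x j * H l j) := by
            refine Finset.sum_congr rfl fun j _ => ?_
            rw [Finset.mul_sum]
            exact Finset.sum_congr rfl fun l _ => by ring
        _ = ∑ l, ∑ j, u l * (x j * H l j) := Finset.sum_comm
        _ = ∑ l, u l * b l := Finset.sum_congr rfl fun l _ => by
            rw [← Finset.mul_sum]
    have h2 : ∑ j, (∑ l, u l * H l j) ^ 2 = ∑ l, ∑ m, u l * u m * a l m := by
      calc ∑ j, (∑ l, u l * H l j) ^ 2
          = ∑ j, ∑ l, ∑ m, (u l * u m) * (H l j * H m j) := by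
            refine Finset.sum_congr rfl fun j _ => ?_
            rw [sq, Finset.sum_mul_sum]
            exact Finset.sum_congr rfl fun l _ =>
              Finset.sum_congr rfl fun m _ => by ring
        _ = ∑ l, ∑ j, ∑ m, (u l * u m) * (H l j * H m j) := Finset.sum_comm
        _ = ∑ l, ∑ m, ∑ j, (u l * u m) * (H l j * H m j) :=
            Finset.sum_congr rfl fun l _ => Finset.sum_comm
        _ = ∑ l, ∑ m, u l * u m * a l m := by
            refine Finset.sum_congr rfl fun l _ =>
              Finset.sum_congr rfl fun m _ => ?_
            rw [← Finset.mul_sum]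
    calc ∑ j, (x j - ∑ l, u l * H l j) ^ 2
        = ∑ j, ((x j) ^ 2 - 2 * (x j * (∑ l, u l * H l j))
            + (∑ l, u l * H l j) ^ 2) := by
          exact Finset.sum_congr rfl fun j _ => by ring
      _ = (∑ j, (x j) ^ 2) - 2 * (∑ j, x j * (∑ l, u l * H l j))
            + ∑ j, (∑ l, u l * H l j) ^ 2 := by
          rw [Finset.sum_add_distrib, Finset.sum_sub_distrib, ← Finset.mul_sum]
      _ = _ := by rw [h1, h2]
  -- cross-term identities
  have cross1 : ∑ l, ∑ m, s l * d m * a l m = ∑ m, d m * c m := by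
    calc ∑ l, ∑ m, s l * d m * a l m
        = ∑ m, ∑ l, s l * d m * a l m := Finset.sum_comm
      _ = ∑ m, d m * c m := by
          refine Finset.sum_congr rfl fun m _ => ?_
          rw [hc]
          simp only []
          rw [Finset.mul_sum]
          refine Finset.sum_congr rfl fun l _ => ?_
          rw [hasymm m l]; ring
  have cross2 : ∑ l, ∑ m, d l * s m * a l m = ∑ l, d l * c l := by
    refine Finset.sum_congr rfl fun l _ => ?_
    rw [hc, Finset.mul_sum]
    exact Finset.sum_congr rfl fun m _ => by ring
  have E1 : ∑ l, ∑ m, s' l * s' m * a l m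
      = (∑ l, ∑ m, s l * s m * a l m) + (∑ l, ∑ m, d l * d m * a l m)
        + (∑ l, ∑ m, s l * d m * a l m) + (∑ l, ∑ m, d l * s m * a l m) := by
    have : ∀ l m : Fin K, s' l * s' m * a l m
        = s l * s m * a l m + d l * d m * a l m
          + s l * d m * a l m + d l * s m * a l m := by
      intro l m
      have e1 : s' l = s l + d l := by simp [hd]
      have e2 : s' m = s m + d m := by simp [hd]
      rw [e1, e2]; ring
    simp only [this, Finset.sum_add_distrib]
  have E2 : ∑ l, s' l * b l = (∑ l, s l * b l) + ∑ l, d l * b l := by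
    rw [← Finset.sum_add_distrib]
    refine Finset.sum_congr rfl fun l _ => ?_
    have : s' l = s l + d l := by simp [hd]
    rw [this]; ring
  -- Step A : PSD majorization
  set g : Fin K → Fin K → ℝ :=
    fun l m => (s m * a l m) * (d l ^ 2 / s l) - d l * d m * a l m with hg
  have gpair : ∀ l m, 0 ≤ g l m + g m l := by
    intro l m
    have hval : g l m + g m l
        = a l m * (s m * d l - s l * d m) ^ 2 / (s l * s m) := by
      have h1 := (hs l).ne'
      have h2 := (hs m).ne'
      simp only [hg]
      rw [hasymm m l]
      field_simp
      ring
    rw [hval]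
    apply div_nonneg
    · exact mul_nonneg (hapos l m).le (sq_nonneg _)
    · exact (mul_pos (hs l) (hs m)).le
  have stepA : ∑ l, ∑ m, d l * d m * a l m ≤ ∑ l, c l / s l * d l ^ 2 := by
    have hnn := sym_sum_nonneg g gpair
    have hsplit : ∑ l, ∑ m, g l m
        = (∑ l, c l / s l * d l ^ 2) - ∑ l, ∑ m, d l * d m * a l m := by
      rw [← Finset.sum_sub_distrib]
      refine Finset.sum_congr rfl fun l _ => ?_
      rw [Finset.sum_sub_distrib]
      congr 1
      have h1 := (hs l).ne'
      rw [← Finset.sum_mul, hc]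
      field_simp
    linarith [hsplit ▸ hnn]
  -- Step B : the tangent-plane decrease
  have stepB : ∑ l, (c l / s l * d l ^ 2 + 2 * (d l * (c l - b l))) ≤ 0 := by
    apply Finset.sum_nonpos
    intro l _
    have hdl : d l = s l * b l / c l - s l := by simp [hd, hs'2 l]
    have hval : c l / s l * d l ^ 2 + 2 * (d l * (c l - b l))
        = -(s l * (b l - c l) ^ 2 / c l) := by
      rw [hdl]
      have h1 := (hs l).ne'
      have h2 := (hcpos l).ne'
      field_simp
      ring
    rw [hval]
    simp only [neg_nonpos]
    apply div_nonneg (mul_nonneg (hs l).le (sq_nonneg _)) (hcpos l).le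
  have stepB' : (∑ l, c l / s l * d l ^ 2) + 2 * (∑ l, d l * c l)
      - 2 * (∑ l, d l * b l) ≤ 0 := by
    have : ∑ l, (c l / s l * d l ^ 2 + 2 * (d l * (c l - b l)))
        = (∑ l, c l / s l * d l ^ 2) + 2 * (∑ l, d l * c l)
          - 2 * (∑ l, d l * b l) := by
      rw [Finset.sum_add_distrib, ← Finset.mul_sum]
      have : ∑ l, d l * (c l - b l) = (∑ l, d l * c l) - ∑ l, d l * b l := by
        rw [← Finset.sum_sub_distrib]
        exact Finset.sum_congr rfl fun l _ => by ring
      rw [this]; ring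
    linarith [this ▸ stepB]
  -- assemble
  rw [expand s', expand s]
  linarith [stepA, stepB', E1, E2, cross1, cross2]

/-- The feature-weighted NMF objective `∑ i, v i * ∑ j, (X i j - (S * H) i j)²`, with
nonnegative feature weights `v`, does not increase under the (weight-independent)
Lee–Seung multiplicative update of `S`. -/
theorem weighted_nmf_S_update_monotone {M N K : ℕ}
    (X : Matrix (Fin M) (Fin N) ℝ) (hX : ∀ i j, 0 ≤ X i j)
    (H : Matrix (Fin K) (Fin N) ℝ) (hH : ∀ l j, 0 < H l j)
    (S : Matrix (Fin M) (Fin K) ℝ) (hS : ∀ i l, 0 < S i l)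
    (v : Fin M → ℝ) (hv : ∀ i, 0 ≤ v i)
    (S' : Matrix (Fin M) (Fin K) ℝ)
    (hS' : ∀ i l, S' i l = S i l * (X * Hᵀ) i l / (S * H * Hᵀ) i l) :
    ∑ i, v i * ∑ j, (X i j - (S' * H) i j) ^ 2 ≤
      ∑ i, v i * ∑ j, (X i j - (S * H) i j) ^ 2 := by
  apply Finset.sum_le_sum
  intro i _
  apply mul_le_mul_of_nonneg_left ?_ (hv i)
  have key := row_key (fun j => X i j) H hH (fun l => S i l) (fun l => S' i l)
    (fun l => hS i l) ?_
  · simpa only [Matrix.mul_apply] using key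
  · intro l
    have := hS' i l
    simpa only [Matrix.mul_apply, Matrix.transpose_apply] using this
end

section
/- Let X ∈ ℝ^{M×N} with all entries nonnegative, S ∈ ℝ^{M×K} with all entries positive, H ∈ ℝ^{K×N} with all entries positive, and let v : Fin M → ℝ with v_i > 0 for all i. Let D = diag(v) and define the multiplicative update H'_{lj} = H_{lj} ((D S)ᵀ X)_{lj} / ((D S)ᵀ S H)_{lj}. Then Σ_i v_i Σ_j (X_{ij} − (SH')_{ij})² ≤ Σ_i v_i Σ_j (X_{ij} − (SH)_{ij})², i.e., the feature-weighted NMF objective does not increase under the weighted multiplicative update of H. -/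
/-!
Column by column, the objective is the quadratic `f(h) = ∑ i, v i * (x i - (S h) i)²`, and
`f(h + δ) = f(h) + 2 δ ⬝ (Q h - b) + δ ⬝ Q δ` with `Q = (D S)ᵀ S`, `b = (D S)ᵀ x`.
For the multiplicative step `δ = h ⊙ b / Q h - h` the linear term equals
`-∑ l, (Q h)_l / h_l δ_l²`, while the Lee–Seung bound for the entrywise nonnegative symmetric
`Q` dominates the quadratic term by that same diagonal form, so `f` cannot increase.
-/

open Finset Matrix

section

variable {ι κ : Type*} [Fintype ι] [Fintype κ]

lemma two_mul_mul_le_div_mul_sq_add_div_mul_sq {p q : ℝ} (hp : 0 < p) (hq : 0 < q) (x y : ℝ) :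
    2 * (x * y) ≤ q / p * x ^ 2 + p / q * y ^ 2 := by
  have key : q / p * x ^ 2 + p / q * y ^ 2 - 2 * (x * y) = (q * x - p * y) ^ 2 / (p * q) := by
    field_simp
    ring
  have : 0 ≤ (q * x - p * y) ^ 2 / (p * q) := by positivity
  linarith

theorem dotProduct_mulVec_le_sum_mulVec_div_mul_sq_s11 {Q : Matrix κ κ ℝ} (hQ : Q.IsSymm)
    (hQ0 : ∀ l m, 0 ≤ Q l m) {h : κ → ℝ} (hh : ∀ l, 0 < h l) (δ : κ → ℝ) :
    δ ⬝ᵥ (Q *ᵥ δ) ≤ ∑ l, (Q *ᵥ h) l / h l * δ l ^ 2 := by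
  set R := ∑ l, ∑ m, Q l m * (h m / h l * δ l ^ 2)
  have hR : ∑ l, (Q *ᵥ h) l / h l * δ l ^ 2 = R := by
    simp only [mulVec, dotProduct, sum_div, sum_mul]
    exact sum_congr rfl fun l _ => sum_congr rfl fun m _ => by ring
  have hR_swap : ∑ l, ∑ m, Q l m * (h l / h m * δ m ^ 2) = R := by
    rw [sum_comm]
    exact sum_congr rfl fun l _ => sum_congr rfl fun m _ => by rw [hQ.apply]
  have : 2 * δ ⬝ᵥ (Q *ᵥ δ) ≤ 2 * R :=
    calc 2 * δ ⬝ᵥ (Q *ᵥ δ) = ∑ l, ∑ m, Q l m * (2 * (δ l * δ m)) := by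
          simp only [dotProduct, mulVec, mul_sum]
          exact sum_congr rfl fun l _ => sum_congr rfl fun m _ => by ring
      _ ≤ ∑ l, ∑ m, Q l m * (h m / h l * δ l ^ 2 + h l / h m * δ m ^ 2) :=
          sum_le_sum fun l _ => sum_le_sum fun m _ => mul_le_mul_of_nonneg_left
            (two_mul_mul_le_div_mul_sq_add_div_mul_sq (hh l) (hh m) _ _) (hQ0 l m)
      _ = 2 * R := by simp only [mul_add, sum_add_distrib, hR_swap]; ring
  linarith

noncomputable def multiplicativeUpdate (Q : Matrix κ κ ℝ) (b h : κ → ℝ) : κ → ℝ :=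
  fun l => h l * b l / (Q *ᵥ h) l

theorem multiplicativeUpdate_sub_dotProduct (Q : Matrix κ κ ℝ) (b : κ → ℝ) {h : κ → ℝ}
    (hh : ∀ l, h l ≠ 0) (ha : ∀ l, (Q *ᵥ h) l ≠ 0) :
    (multiplicativeUpdate Q b h - h) ⬝ᵥ (Q *ᵥ h - b) =
      -∑ l, (Q *ᵥ h) l / h l * (multiplicativeUpdate Q b h - h) l ^ 2 := by
  simp only [dotProduct, ← sum_neg_distrib]
  refine sum_congr rfl fun l _ => ?_
  have := hh l
  have := ha l
  simp only [multiplicativeUpdate, Pi.sub_apply]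
  field_simp
  ring

variable [DecidableEq ι]

lemma sum_mul_mulVec_mul_eq_dotProduct (A : Matrix ι κ ℝ) (v w : ι → ℝ) (δ : κ → ℝ) :
    ∑ i, v i * ((A *ᵥ δ) i * w i) = δ ⬝ᵥ ((diagonal v * A)ᵀ *ᵥ w) := by
  simp only [dotProduct, mulVec, transpose_apply, diagonal_mul, sum_mul, mul_sum]
  rw [sum_comm]
  exact sum_congr rfl fun l _ => sum_congr rfl fun i _ => by ring

lemma sum_mul_sub_mulVec_add_sq (A : Matrix ι κ ℝ) (v x : ι → ℝ) (h δ : κ → ℝ) :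
    ∑ i, v i * (x i - (A *ᵥ (h + δ)) i) ^ 2 =
      ∑ i, v i * (x i - (A *ᵥ h) i) ^ 2 +
        2 * δ ⬝ᵥ (((diagonal v * A)ᵀ * A) *ᵥ h - (diagonal v * A)ᵀ *ᵥ x) +
        δ ⬝ᵥ (((diagonal v * A)ᵀ * A) *ᵥ δ) := by
  rw [← mulVec_mulVec, ← mulVec_sub, ← mulVec_mulVec, ← sum_mul_mulVec_mul_eq_dotProduct,
    ← sum_mul_mulVec_mul_eq_dotProduct, mul_sum, ← sum_add_distrib, ← sum_add_distrib]
  refine sum_congr rfl fun i _ => ?_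
  simp only [mulVec_add, Pi.add_apply, Pi.sub_apply]
  ring

theorem sum_mul_sub_mulVec_multiplicativeUpdate_sq_le {A : Matrix ι κ ℝ}
    (hA : ∀ i l, 0 ≤ A i l) {v : ι → ℝ} (hv : ∀ i, 0 ≤ v i) (x : ι → ℝ) {h : κ → ℝ}
    (hh : ∀ l, 0 < h l) (ha : ∀ l, 0 < (((diagonal v * A)ᵀ * A) *ᵥ h) l) :
    ∑ i, v i * (x i - (A *ᵥ
        multiplicativeUpdate ((diagonal v * A)ᵀ * A) ((diagonal v * A)ᵀ *ᵥ x) h) i) ^ 2 ≤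
      ∑ i, v i * (x i - (A *ᵥ h) i) ^ 2 := by
  set Q := (diagonal v * A)ᵀ * A
  set b := (diagonal v * A)ᵀ *ᵥ x
  set δ := multiplicativeUpdate Q b h - h
  have hQ : Q.IsSymm := by
    simp only [Q, IsSymm, transpose_mul, transpose_transpose, diagonal_transpose,
      Matrix.mul_assoc]
  have hQ0 : ∀ l m, 0 ≤ Q l m := fun l m => by
    simp only [Q, mul_apply (M := (diagonal v * A)ᵀ), transpose_apply, diagonal_mul]
    exact sum_nonneg fun i _ => mul_nonneg (mul_nonneg (hv i) (hA i l)) (hA i m)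
  have hquad := dotProduct_mulVec_le_sum_mulVec_div_mul_sq_s11 hQ hQ0 hh δ
  have hlin : δ ⬝ᵥ (Q *ᵥ h - b) = -∑ l, (Q *ᵥ h) l / h l * δ l ^ 2 :=
    multiplicativeUpdate_sub_dotProduct Q b (fun l => (hh l).ne') (fun l => (ha l).ne')
  have hdiag : 0 ≤ ∑ l, (Q *ᵥ h) l / h l * δ l ^ 2 :=
    sum_nonneg fun l _ => mul_nonneg (div_nonneg (ha l).le (hh l).le) (sq_nonneg _)
  calc _ = ∑ i, v i * (x i - (A *ᵥ h) i) ^ 2 + 2 * δ ⬝ᵥ (Q *ᵥ h - b) + δ ⬝ᵥ (Q *ᵥ δ) := by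
        rw [show multiplicativeUpdate Q b h = h + δ by simp only [δ, add_sub_cancel]]
        exact sum_mul_sub_mulVec_add_sq A v x h δ
    _ ≤ _ := by linarith

end

theorem weighted_nmf_H_update_monotone_general {M N K : ℕ}
    (X : Matrix (Fin M) (Fin N) ℝ)
    (S : Matrix (Fin M) (Fin K) ℝ) (hS : ∀ i l, 0 < S i l)
    (H : Matrix (Fin K) (Fin N) ℝ) (hH : ∀ l j, 0 < H l j)
    (v : Fin M → ℝ) (hv : ∀ i, 0 < v i)
    (D : Matrix (Fin M) (Fin M) ℝ) (hD : D = Matrix.diagonal v)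
    (H' : Matrix (Fin K) (Fin N) ℝ)
    (hH' : ∀ l j, H' l j = H l j * ((D * S)ᵀ * X) l j / ((D * S)ᵀ * S * H) l j) :
    ∑ i, v i * ∑ j, (X i j - (S * H') i j) ^ 2 ≤
      ∑ i, v i * ∑ j, (X i j - (S * H) i j) ^ 2 := by
  subst hD
  rcases isEmpty_or_nonempty (Fin M) with _ | _
  · simp
  have hcols : ∀ G : Matrix (Fin K) (Fin N) ℝ, ∑ i, v i * ∑ j, (X i j - (S * G) i j) ^ 2 =
      ∑ j, ∑ i, v i * (Xᵀ j i - (S *ᵥ Gᵀ j) i) ^ 2 := fun G => by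
    simp only [mul_sum]
    exact sum_comm
  have hH'_col : ∀ j, H'ᵀ j =
      multiplicativeUpdate ((diagonal v * S)ᵀ * S) ((diagonal v * S)ᵀ *ᵥ Xᵀ j) (Hᵀ j) :=
    fun j => funext fun l => hH' l j
  have hdenom : ∀ l j, 0 < ((diagonal v * S)ᵀ * S * H) l j := fun l j => by
    simp only [mul_apply (N := H), mul_apply (M := (diagonal v * S)ᵀ), transpose_apply,
      diagonal_mul]
    refine sum_pos (fun m _ => mul_pos (sum_pos (fun i _ => ?_) univ_nonempty) (hH m j))
      ⟨l, mem_univ l⟩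
    have := hv i; have := hS i l; have := hS i m
    positivity
  rw [hcols, hcols]
  refine sum_le_sum fun j _ => ?_
  rw [hH'_col]
  exact sum_mul_sub_mulVec_multiplicativeUpdate_sq_le (fun i l => (hS i l).le)
    (fun i => (hv i).le) _ (fun l => hH l j) (fun l => hdenom l j)

/-- The feature-weighted NMF objective `∑ i, v i * ∑ j, (X i j - (S * H) i j)²`, with
positive feature weights `v` and `D = diagonal v`, does not increase under the weighted
multiplicative update `H' l j = H l j * ((D * S)ᵀ * X) l j / ((D * S)ᵀ * S * H) l j`. -/
theorem weighted_nmf_H_update_monotone {M N K : ℕ}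
    (X : Matrix (Fin M) (Fin N) ℝ) (hX : ∀ i j, 0 ≤ X i j)
    (S : Matrix (Fin M) (Fin K) ℝ) (hS : ∀ i l, 0 < S i l)
    (H : Matrix (Fin K) (Fin N) ℝ) (hH : ∀ l j, 0 < H l j)
    (v : Fin M → ℝ) (hv : ∀ i, 0 < v i)
    (D : Matrix (Fin M) (Fin M) ℝ) (hD : D = Matrix.diagonal v)
    (H' : Matrix (Fin K) (Fin N) ℝ)
    (hH' : ∀ l j, H' l j = H l j * ((D * S)ᵀ * X) l j / ((D * S)ᵀ * S * H) l j) :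
    ∑ i, v i * ∑ j, (X i j - (S * H') i j) ^ 2 ≤
      ∑ i, v i * ∑ j, (X i j - (S * H) i j) ^ 2 :=
  weighted_nmf_H_update_monotone_general X S hS H hH v hv D hD H' hH'
end

section
/- Let X ∈ ℝ^{M×N} with all entries nonnegative, let p > 1, and let (W^t, S^t, H^t) be a current iterate with W^t on the probability simplex of ℝ^M, all entries of S^t positive, all entries of H^t positive, and e_i := Σ_j (X_{ij} − (S^t H^t)_{ij})² > 0 for every i. Define one FWNMF iteration: W^{t+1}_i = e_i^{-1/(p-1)} / Σ_l e_l^{-1/(p-1)}; S^{t+1}_{il} = S^t_{il} (X (H^t)ᵀ)_{il} / (S^t H^t (H^t)ᵀ)_{il}; and H^{t+1}_{lj} = H^t_{lj} ((diag((W^{t+1})^p) S^{t+1})ᵀ X)_{lj} / ((diag((W^{t+1})^p) S^{t+1})ᵀ S^{t+1} H^t)_{lj}, where (W^{t+1})^p denotes the vector with entries (W^{t+1}_i)^p. Then F₃(W^{t+1}, S^{t+1}, H^{t+1}) ≤ F₃(W^t, S^t, H^t), where F₃(W, S, H) = Σ_{i,j} W_i^p (X_{ij} − (SH)_{ij})².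 -/
open Finset Matrix

section helpers

/-- Symmetric nonnegative quadratic form bound used in the auxiliary function argument. -/
lemma fwnmf_quad_bound {K : ℕ} (B : Matrix (Fin K) (Fin K) ℝ)
    (hBs : ∀ l k, B l k = B k l) (hBnn : ∀ l k, 0 ≤ B l k)
    (h u : Fin K → ℝ) (hh : ∀ l, 0 ≤ h l) :
    ∑ l, ∑ k, B l k * h l * h k * u l * u k ≤ ∑ l, ∑ k, B l k * h l * h k * u l ^ 2 := by
  have swap : ∑ l, ∑ k, B l k * h l * h k * u k ^ 2 = ∑ l, ∑ k, B l k * h l * h k * u l ^ 2 := by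
    rw [Finset.sum_comm]
    exact Finset.sum_congr rfl fun l _ => Finset.sum_congr rfl fun k _ => by rw [hBs]; ring
  have key : 0 ≤ ∑ l, ∑ k, (B l k * h l * h k * u l ^ 2 -
      2 * (B l k * h l * h k * u l * u k) + B l k * h l * h k * u k ^ 2) := by
    apply Finset.sum_nonneg; intro l _; apply Finset.sum_nonneg; intro k _
    have : B l k * h l * h k * u l ^ 2 - 2 * (B l k * h l * h k * u l * u k)
        + B l k * h l * h k * u k ^ 2 = B l k * h l * h k * (u l - u k) ^ 2 := by ring
    rw [this]
    have := hBnn l k; have := hh l; have := hh k; positivity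
  simp only [Finset.sum_add_distrib, Finset.sum_sub_distrib, ← Finset.mul_sum] at key
  linarith [swap]

/-- One weighted-least-squares multiplicative update does not increase the objective. -/
lemma fwnmf_wls_step {I K : ℕ} (d : Fin I → ℝ) (hd : ∀ i, 0 ≤ d i)
    (A : Matrix (Fin I) (Fin K) ℝ) (hA : ∀ i k, 0 ≤ A i k)
    (x : Fin I → ℝ)
    (h h' : Fin K → ℝ) (hh : ∀ l, 0 < h l)
    (b c : Fin K → ℝ)
    (hb : ∀ l, b l = ∑ i, d i * A i l * x i)
    (hc : ∀ l, c l = ∑ i, d i * A i l * (∑ k, A i k * h k))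
    (hcpos : ∀ l, 0 < c l)
    (hh' : ∀ l, h' l = h l * b l / c l) :
    ∑ i, d i * (x i - ∑ k, A i k * h' k) ^ 2 ≤ ∑ i, d i * (x i - ∑ k, A i k * h k) ^ 2 := by
  set B : Matrix (Fin K) (Fin K) ℝ := fun l k => ∑ i, d i * A i l * A i k with hB
  set r : Fin I → ℝ := fun i => x i - ∑ k, A i k * h k with hr
  set δ : Fin K → ℝ := fun l => h' l - h l with hδ
  have hδval : ∀ l, δ l = h l * (b l - c l) / c l := by
    intro l
    have hc0 := (hcpos l).ne'
    simp only [hδ, hh' l]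
    field_simp
  -- residual expansion
  have hres : ∀ i, x i - ∑ k, A i k * h' k = r i - ∑ k, A i k * δ k := by
    intro i
    simp only [hr, hδ, mul_sub, Finset.sum_sub_distrib]
    ring
  -- c as B * h
  have hcB : ∀ l, c l = ∑ k, B l k * h k := by
    intro l
    rw [hc]
    simp only [hB, Finset.mul_sum, Finset.sum_mul]
    rw [Finset.sum_comm]
    exact Finset.sum_congr rfl fun i _ => Finset.sum_congr rfl fun k _ => by ring
  -- split the square
  have hsplit : ∑ i, d i * (x i - ∑ k, A i k * h' k) ^ 2 =
      ∑ i, d i * r i ^ 2 - 2 * (∑ i, d i * r i * (∑ k, A i k * δ k))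
        + ∑ i, d i * (∑ k, A i k * δ k) ^ 2 := by
    simp only [hres]
    have expand : ∀ i, d i * (r i - ∑ k, A i k * δ k) ^ 2 =
        d i * r i ^ 2 - 2 * (d i * r i * (∑ k, A i k * δ k))
          + d i * (∑ k, A i k * δ k) ^ 2 := fun i => by ring
    simp only [expand, Finset.sum_add_distrib, Finset.sum_sub_distrib, ← Finset.mul_sum]
  -- cross term
  have hcross : ∑ i, d i * r i * (∑ k, A i k * δ k) = ∑ k, δ k * (b k - c k) := by
    have : ∀ i, d i * r i * (∑ k, A i k * δ k) = ∑ k, δ k * (d i * A i k * r i) :=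
      fun i => by rw [Finset.mul_sum]; exact Finset.sum_congr rfl fun k _ => by ring
    simp only [this]
    rw [Finset.sum_comm]
    refine Finset.sum_congr rfl fun k _ => ?_
    rw [← Finset.mul_sum, hb, hc, ← Finset.sum_sub_distrib]
    congr 1
    exact Finset.sum_congr rfl fun i _ => by simp only [hr]; ring
  -- quadratic term equals the B-quadratic form
  have hquad : ∑ i, d i * (∑ k, A i k * δ k) ^ 2 = ∑ l, ∑ k, δ l * B l k * δ k := by
    have : ∀ i, d i * (∑ l, A i l * δ l) ^ 2 =
        ∑ l, ∑ k, δ l * (d i * A i l * A i k) * δ k := by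
      intro i
      rw [sq, Finset.sum_mul_sum, Finset.mul_sum]
      refine Finset.sum_congr rfl fun l _ => ?_
      rw [Finset.mul_sum]
      exact Finset.sum_congr rfl fun k _ => by ring
    simp only [this, hB]
    rw [Finset.sum_comm]
    refine Finset.sum_congr rfl fun l _ => ?_
    rw [Finset.sum_comm]
    refine Finset.sum_congr rfl fun k _ => ?_
    simp only [Finset.mul_sum, Finset.sum_mul]
  -- B is symmetric with nonnegative entries
  have hBs : ∀ l k, B l k = B k l := fun l k =>
    Finset.sum_congr rfl fun i _ => by ring
  have hBnn : ∀ l k, 0 ≤ B l k := fun l k =>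
    Finset.sum_nonneg fun i _ => mul_nonneg (mul_nonneg (hd i) (hA i l)) (hA i k)
  set u : Fin K → ℝ := fun l => δ l / h l with hu
  have hhu : ∀ l, h l * u l = δ l := fun l => by
    simp only [hu]; rw [mul_comm]; exact div_mul_cancel₀ _ (hh l).ne'
  have hquadle : ∑ l, ∑ k, δ l * B l k * δ k ≤ ∑ l, c l * (δ l ^ 2 / h l) := by
    have key := fwnmf_quad_bound B hBs hBnn h u (fun l => (hh l).le)
    have e1 : ∑ l, ∑ k, B l k * h l * h k * u l * u k = ∑ l, ∑ k, δ l * B l k * δ k := by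
      refine Finset.sum_congr rfl fun l _ => Finset.sum_congr rfl fun k _ => ?_
      rw [← hhu l, ← hhu k]; ring
    have e2 : ∑ l, ∑ k, B l k * h l * h k * u l ^ 2 = ∑ l, c l * (δ l ^ 2 / h l) := by
      refine Finset.sum_congr rfl fun l _ => ?_
      rw [hcB l, Finset.sum_mul]
      refine Finset.sum_congr rfl fun k _ => ?_
      have hl0 := (hh l).ne'
      simp only [hu]
      field_simp
    rw [e1, e2] at key
    exact key
  set T : ℝ := ∑ l, h l * (b l - c l) ^ 2 / c l with hT
  have hTnn : 0 ≤ T :=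
    Finset.sum_nonneg fun l _ => div_nonneg
      (mul_nonneg (hh l).le (sq_nonneg _)) (hcpos l).le
  have hcrossT : ∑ k, δ k * (b k - c k) = T := by
    refine Finset.sum_congr rfl fun l _ => ?_
    rw [hδval l]
    have := (hcpos l).ne'
    field_simp
  have hquadT : ∑ l, c l * (δ l ^ 2 / h l) = T := by
    refine Finset.sum_congr rfl fun l _ => ?_
    rw [hδval l]
    have := (hcpos l).ne'
    have := (hh l).ne'
    field_simp
  rw [hsplit, hcross, hcrossT]
  have : ∑ i, d i * (∑ k, A i k * δ k) ^ 2 ≤ T := by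
    rw [hquad]; rw [hquadT] at hquadle; exact hquadle
  have hfr : ∑ i, d i * r i ^ 2 = ∑ i, d i * (x i - ∑ k, A i k * h k) ^ 2 := rfl
  linarith

lemma fwnmf_weight_step {M : ℕ} (p : ℝ) (hp : 1 < p)
    (e : Fin M → ℝ) (he : ∀ i, 0 < e i)
    (Wt : Fin M → ℝ) (hWt : ∀ i, 0 ≤ Wt i) (hWtsum : ∑ i, Wt i = 1)
    (W1 : Fin M → ℝ)
    (hW1 : ∀ i, W1 i = e i ^ (-(1 / (p - 1))) / ∑ l, e l ^ (-(1 / (p - 1)))) :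
    ∑ i, W1 i ^ p * e i ≤ ∑ i, Wt i ^ p * e i := by
  have hp1 : (0:ℝ) < p - 1 := by linarith
  have hM : 0 < M := by
    by_contra hM
    push_neg at hM
    interval_cases M
    simp at hWtsum
  haveI : Nonempty (Fin M) := ⟨⟨0, hM⟩⟩
  set Z : ℝ := ∑ l, e l ^ (-(1 / (p - 1))) with hZ
  have hZpos : 0 < Z :=
    Finset.sum_pos (fun l _ => Real.rpow_pos_of_pos (he l) _) Finset.univ_nonempty
  have hW1pos : ∀ i, 0 < W1 i := fun i => by
    rw [hW1 i]
    exact div_pos (Real.rpow_pos_of_pos (he i) _) hZpos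
  have hW1sum : ∑ i, W1 i = 1 := by
    simp only [hW1]
    rw [← Finset.sum_div, ← hZ, div_self hZpos.ne']
  set A : ℝ := (Z ^ (p - 1))⁻¹ with hA
  have hconst : ∀ i, W1 i ^ (p - 1) * e i = A := by
    intro i
    rw [hW1 i, Real.div_rpow (Real.rpow_nonneg (he i).le _) hZpos.le,
      ← Real.rpow_mul (he i).le]
    have hexp : -(1 / (p - 1)) * (p - 1) = -1 := by field_simp
    rw [hexp, Real.rpow_neg_one, hA]
    have he0 := (he i).ne'
    field_simp
  have hpe : ∀ w : ℝ, 0 < w → w ^ p = w * w ^ (p - 1) := by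
    intro w hw
    calc w ^ p = w ^ (1 + (p - 1)) := by norm_num
      _ = w ^ (1:ℝ) * w ^ (p - 1) := Real.rpow_add hw 1 (p - 1)
      _ = w * w ^ (p - 1) := by rw [Real.rpow_one]
  have hLHS : ∑ i, W1 i ^ p * e i = A := by
    have hterm : ∀ i, W1 i ^ p * e i = A * W1 i := fun i => by
      rw [hpe _ (hW1pos i), mul_assoc, hconst i]; ring
    simp only [hterm]
    rw [← Finset.mul_sum, hW1sum, mul_one]
  have tangent : ∀ i, W1 i ^ p + p * (W1 i ^ (p - 1) * (Wt i - W1 i)) ≤ Wt i ^ p := by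
    intro i
    have hw := hW1pos i
    have hs : -1 ≤ Wt i / W1 i - 1 := by
      have : 0 ≤ Wt i / W1 i := div_nonneg (hWt i) hw.le
      linarith
    have key := one_add_mul_self_le_rpow_one_add hs hp.le
    rw [show (1:ℝ) + (Wt i / W1 i - 1) = Wt i / W1 i by ring,
      Real.div_rpow (hWt i) hw.le] at key
    have hwp : 0 < W1 i ^ p := Real.rpow_pos_of_pos hw p
    have h2 := mul_le_mul_of_nonneg_left key hwp.le
    rw [mul_comm (W1 i ^ p) (Wt i ^ p / W1 i ^ p), div_mul_cancel₀ _ hwp.ne'] at h2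
    have expand : W1 i ^ p * (1 + p * (Wt i / W1 i - 1)) =
        W1 i ^ p + p * (W1 i ^ (p - 1) * (Wt i - W1 i)) := by
      rw [hpe _ hw]
      field_simp
    linarith [expand ▸ h2]
  have hterm2 : ∀ i, W1 i ^ p * e i + p * (A * (Wt i - W1 i)) ≤ Wt i ^ p * e i := by
    intro i
    have h2 := mul_le_mul_of_nonneg_right (tangent i) (he i).le
    have h3 : W1 i ^ p * e i + p * (W1 i ^ (p - 1) * e i * (Wt i - W1 i)) ≤
        Wt i ^ p * e i := by
      calc W1 i ^ p * e i + p * (W1 i ^ (p - 1) * e i * (Wt i - W1 i))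
          = (W1 i ^ p + p * (W1 i ^ (p - 1) * (Wt i - W1 i))) * e i := by ring
        _ ≤ Wt i ^ p * e i := h2
    rwa [hconst i] at h3
  have hsum := Finset.sum_le_sum fun i (_ : i ∈ Finset.univ) => hterm2 i
  have hzero : ∑ i, (W1 i ^ p * e i + p * (A * (Wt i - W1 i))) =
      ∑ i, W1 i ^ p * e i := by
    rw [Finset.sum_add_distrib, ← Finset.mul_sum, ← Finset.mul_sum,
      Finset.sum_sub_distrib, hWtsum, hW1sum]
    simp
  rw [hzero] at hsum
  exact hsum

end helpers

/-- One full FWNMF iteration (closed-form weight update Eq. (16), multiplicative `S`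
update Eq. (18), weighted multiplicative `H` update Eq. (19)) does not increase the
FWNMF objective `F₃(W, S, H) = ∑ i j, W i ^ p * (X i j - (S * H) i j)²`. -/
theorem fwnmf_iteration_monotone {M N K : ℕ} (p : ℝ) (hp : 1 < p)
    (X : Matrix (Fin M) (Fin N) ℝ) (hX : ∀ i j, 0 ≤ X i j)
    (Wt : Fin M → ℝ) (hWt : ∀ i, 0 ≤ Wt i) (hWtsum : ∑ i, Wt i = 1)
    (St : Matrix (Fin M) (Fin K) ℝ) (hSt : ∀ i l, 0 < St i l)
    (Ht : Matrix (Fin K) (Fin N) ℝ) (hHt : ∀ l j, 0 < Ht l j)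
    (e : Fin M → ℝ) (he_def : ∀ i, e i = ∑ j, (X i j - (St * Ht) i j) ^ 2)
    (he : ∀ i, 0 < e i)
    (W1 : Fin M → ℝ)
    (hW1 : ∀ i, W1 i = e i ^ (-(1 / (p - 1))) / ∑ l, e l ^ (-(1 / (p - 1))))
    (S1 : Matrix (Fin M) (Fin K) ℝ)
    (hS1 : ∀ i l, S1 i l = St i l * (X * Htᵀ) i l / (St * Ht * Htᵀ) i l)
    (H1 : Matrix (Fin K) (Fin N) ℝ)
    (hH1 : ∀ l j, H1 l j =
      Ht l j * ((Matrix.diagonal (fun i => W1 i ^ p) * S1)ᵀ * X) l j /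
        ((Matrix.diagonal (fun i => W1 i ^ p) * S1)ᵀ * S1 * Ht) l j) :
    ∑ i, ∑ j, W1 i ^ p * (X i j - (S1 * H1) i j) ^ 2 ≤
      ∑ i, ∑ j, Wt i ^ p * (X i j - (St * Ht) i j) ^ 2 := by
  -- nonemptiness
  have hM : 0 < M := by
    by_contra hM
    push_neg at hM
    interval_cases M
    simp at hWtsum
  haveI : Nonempty (Fin M) := ⟨⟨0, hM⟩⟩
  haveI hNne : Nonempty (Fin N) := by
    by_contra hN
    haveI := not_nonempty_iff.mp hN
    have h0 := he_def ⟨0, hM⟩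
    rw [Finset.univ_eq_empty, Finset.sum_empty] at h0
    exact absurd h0 (he ⟨0, hM⟩).ne'
  -- W1 is positive
  have hW1pos : ∀ i, 0 < W1 i := by
    intro i
    rw [hW1 i]
    exact div_pos (Real.rpow_pos_of_pos (he i) _)
      (Finset.sum_pos (fun l _ => Real.rpow_pos_of_pos (he l) _) Finset.univ_nonempty)
  have hW1p : ∀ i, 0 < W1 i ^ p := fun i => Real.rpow_pos_of_pos (hW1pos i) p
  -- denominator for the S-update is positive
  have hdenS : ∀ i l, 0 < (St * Ht * Htᵀ) i l := by
    intro i l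
    haveI : Nonempty (Fin K) := ⟨l⟩
    rw [Matrix.mul_apply]
    refine Finset.sum_pos (fun j _ => ?_) Finset.univ_nonempty
    rw [Matrix.transpose_apply, Matrix.mul_apply]
    exact mul_pos (Finset.sum_pos (fun k _ => mul_pos (hSt i k) (hHt k j))
      Finset.univ_nonempty) (hHt l j)
  have hS1nn : ∀ i l, 0 ≤ S1 i l := by
    intro i l
    rw [hS1 i l]
    refine div_nonneg (mul_nonneg (hSt i l).le ?_) (hdenS i l).le
    rw [Matrix.mul_apply]
    exact Finset.sum_nonneg fun j _ =>
      mul_nonneg (hX i j) (hHt l j).le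
  -- Step 1 : S-update does not increase the residual of each row
  have step1 : ∀ i, ∑ j, (X i j - (S1 * Ht) i j) ^ 2 ≤ e i := by
    intro i
    rw [he_def i]
    have key := fwnmf_wls_step (I := N) (K := K) (fun _ => 1) (fun _ => le_refl (0:ℝ)|>.trans zero_le_one)
      (fun j k => Ht k j) (fun j k => (hHt k j).le)
      (fun j => X i j)
      (fun k => St i k) (fun k => S1 i k) (fun k => hSt i k)
      (fun l => (X * Htᵀ) i l) (fun l => (St * Ht * Htᵀ) i l)
      (fun l => by
        simp only [Matrix.mul_apply, Matrix.transpose_apply]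
        exact Finset.sum_congr rfl fun j _ => by ring)
      (fun l => by
        simp only [Matrix.mul_apply, Matrix.transpose_apply]
        refine Finset.sum_congr rfl fun j _ => ?_
        rw [show ∑ k, Ht k j * St i k = ∑ k, St i k * Ht k j from
          Finset.sum_congr rfl fun k _ => mul_comm _ _]
        ring)
      (fun l => hdenS i l)
      (fun l => hS1 i l)
    simp only [one_mul] at key
    calc ∑ j, (X i j - (S1 * Ht) i j) ^ 2
        = ∑ j, (X i j - ∑ k, Ht k j * S1 i k) ^ 2 := by
          refine Finset.sum_congr rfl fun j _ => ?_
          rw [Matrix.mul_apply]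
          congr 1
          rw [sub_right_inj]
          exact Finset.sum_congr rfl fun k _ => by ring
      _ ≤ ∑ j, (X i j - ∑ k, Ht k j * St i k) ^ 2 := key
      _ = ∑ j, (X i j - (St * Ht) i j) ^ 2 := by
          refine Finset.sum_congr rfl fun j _ => ?_
          rw [Matrix.mul_apply]
          congr 1
          rw [sub_right_inj]
          exact Finset.sum_congr rfl fun k _ => by ring
    -- Step 2 : H-update, and final assembly
  have hRHS : ∑ i, ∑ j, Wt i ^ p * (X i j - (St * Ht) i j) ^ 2 = ∑ i, Wt i ^ p * e i := by
    refine Finset.sum_congr rfl fun i _ => ?_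
    rw [← Finset.mul_sum, he_def i]
  have hMid : ∑ i, ∑ j, W1 i ^ p * (X i j - (S1 * Ht) i j) ^ 2 ≤ ∑ i, W1 i ^ p * e i := by
    refine Finset.sum_le_sum fun i _ => ?_
    rw [← Finset.mul_sum]
    exact mul_le_mul_of_nonneg_left (step1 i) (hW1p i).le
  have hweight : ∑ i, W1 i ^ p * e i ≤ ∑ i, Wt i ^ p * e i :=
    fwnmf_weight_step p hp e he Wt hWt hWtsum W1 hW1
  by_cases hXzero : ∀ i j, X i j = 0
  · -- X = 0 : the left-hand side vanishes
    have hS1zero : ∀ i l, S1 i l = 0 := by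
      intro i l
      rw [hS1 i l]
      have hnum : (X * Htᵀ) i l = 0 := by
        rw [Matrix.mul_apply]
        exact Finset.sum_eq_zero fun j _ => by simp [hXzero i j]
      rw [hnum, mul_zero, zero_div]
    have hS1H1 : ∀ i j, (S1 * H1) i j = 0 := fun i j => by
      rw [Matrix.mul_apply]
      exact Finset.sum_eq_zero fun k _ => by rw [hS1zero]; ring
    have hlhs : ∑ i, ∑ j, W1 i ^ p * (X i j - (S1 * H1) i j) ^ 2 = 0 := by
      refine Finset.sum_eq_zero fun i _ => Finset.sum_eq_zero fun j _ => ?_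
      rw [hXzero i j, hS1H1 i j]
      ring
    rw [hlhs]
    refine Finset.sum_nonneg fun i _ => Finset.sum_nonneg fun j _ =>
      mul_nonneg (Real.rpow_nonneg (hWt i) p) (sq_nonneg _)
  · push_neg at hXzero
    obtain ⟨i0, j0, hXij⟩ := hXzero
    have hX0 : 0 < X i0 j0 := (hX i0 j0).lt_of_ne (Ne.symm hXij)
    have hS1i0 : ∀ l, 0 < S1 i0 l := by
      intro l
      rw [hS1 i0 l]
      refine div_pos (mul_pos (hSt i0 l) ?_) (hdenS i0 l)
      rw [Matrix.mul_apply]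
      refine Finset.sum_pos' (fun j _ => ?_) ⟨j0, Finset.mem_univ _, ?_⟩
      · exact mul_nonneg (hX i0 j) (Matrix.transpose_apply Ht j l ▸ (hHt l j).le)
      · rw [Matrix.transpose_apply]
        exact mul_pos hX0 (hHt l j0)
    set D : Fin M → ℝ := fun i => W1 i ^ p with hD
    have hb2 : ∀ l j, ((Matrix.diagonal D * S1)ᵀ * X) l j = ∑ i, D i * S1 i l * X i j := by
      intro l j
      rw [Matrix.mul_apply]
      exact Finset.sum_congr rfl fun i _ => by
        rw [Matrix.transpose_apply, Matrix.diagonal_mul]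
    have hc2 : ∀ l j, ((Matrix.diagonal D * S1)ᵀ * S1 * Ht) l j =
        ∑ i, D i * S1 i l * (∑ k, S1 i k * Ht k j) := by
      intro l j
      rw [Matrix.mul_apply]
      have : ∀ k, ((Matrix.diagonal D * S1)ᵀ * S1) l k * Ht k j =
          ∑ i, D i * S1 i l * (S1 i k * Ht k j) := by
        intro k
        rw [Matrix.mul_apply, Finset.sum_mul]
        exact Finset.sum_congr rfl fun i _ => by
          rw [Matrix.transpose_apply, Matrix.diagonal_mul]; ring
      simp only [this]
      rw [Finset.sum_comm]
      exact Finset.sum_congr rfl fun i _ => by rw [Finset.mul_sum]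
    have hcpos2 : ∀ l j, 0 < ((Matrix.diagonal D * S1)ᵀ * S1 * Ht) l j := by
      intro l j
      haveI : Nonempty (Fin K) := ⟨l⟩
      rw [hc2 l j]
      refine Finset.sum_pos' (fun i _ => ?_) ⟨i0, Finset.mem_univ _, ?_⟩
      · exact mul_nonneg (mul_nonneg (hW1p i).le (hS1nn i l))
          (Finset.sum_nonneg fun k _ => mul_nonneg (hS1nn i k) (hHt k j).le)
      · exact mul_pos (mul_pos (hW1p i0) (hS1i0 l))
          (Finset.sum_pos (fun k _ => mul_pos (hS1i0 k) (hHt k j)) Finset.univ_nonempty)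
    have step2 : ∀ j, ∑ i, D i * (X i j - ∑ k, S1 i k * H1 k j) ^ 2 ≤
        ∑ i, D i * (X i j - ∑ k, S1 i k * Ht k j) ^ 2 := by
      intro j
      exact fwnmf_wls_step D (fun i => (hW1p i).le) S1 hS1nn
        (fun i => X i j) (fun k => Ht k j) (fun k => H1 k j) (fun k => hHt k j)
        (fun l => ((Matrix.diagonal D * S1)ᵀ * X) l j)
        (fun l => ((Matrix.diagonal D * S1)ᵀ * S1 * Ht) l j)
        (fun l => hb2 l j) (fun l => hc2 l j) (fun l => hcpos2 l j)
        (fun l => hH1 l j)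
    have hstep2sum : ∑ i, ∑ j, W1 i ^ p * (X i j - (S1 * H1) i j) ^ 2 ≤
        ∑ i, ∑ j, W1 i ^ p * (X i j - (S1 * Ht) i j) ^ 2 := by
      calc ∑ i, ∑ j, W1 i ^ p * (X i j - (S1 * H1) i j) ^ 2
          = ∑ j, ∑ i, W1 i ^ p * (X i j - (S1 * H1) i j) ^ 2 := Finset.sum_comm
        _ ≤ ∑ j, ∑ i, W1 i ^ p * (X i j - (S1 * Ht) i j) ^ 2 := ?_
        _ = ∑ i, ∑ j, W1 i ^ p * (X i j - (S1 * Ht) i j) ^ 2 := Finset.sum_comm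
      refine Finset.sum_le_sum fun j _ => ?_
      calc ∑ i, W1 i ^ p * (X i j - (S1 * H1) i j) ^ 2
          = ∑ i, D i * (X i j - ∑ k, S1 i k * H1 k j) ^ 2 := by
            refine Finset.sum_congr rfl fun i _ => ?_
            rw [Matrix.mul_apply]
        _ ≤ ∑ i, D i * (X i j - ∑ k, S1 i k * Ht k j) ^ 2 := step2 j
        _ = ∑ i, W1 i ^ p * (X i j - (S1 * Ht) i j) ^ 2 := by
            refine Finset.sum_congr rfl fun i _ => ?_
            rw [Matrix.mul_apply]
    calc ∑ i, ∑ j, W1 i ^ p * (X i j - (S1 * H1) i j) ^ 2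
        ≤ ∑ i, ∑ j, W1 i ^ p * (X i j - (S1 * Ht) i j) ^ 2 := hstep2sum
      _ ≤ ∑ i, W1 i ^ p * e i := hMid
      _ ≤ ∑ i, Wt i ^ p * e i := hweight
      _ = ∑ i, ∑ j, Wt i ^ p * (X i j - (St * Ht) i j) ^ 2 := hRHS.symm
end

section
/- Let X ∈ ℝ^{M×N} with all entries nonnegative, let γ > 0, and let (W^t, S^t, H^t) be a current iterate with W^t on the probability simplex of ℝ^M with all entries positive, all entries of S^t positive, and all entries of H^t positive; set e_i := Σ_j (X_{ij} − (S^t H^t)_{ij})². Define one ERWNMF iteration: W^{t+1}_i = exp(−e_i/γ) / Σ_l exp(−e_l/γ); S^{t+1}_{il} = S^t_{il} (X (H^t)ᵀ)_{il} / (S^t H^t (H^t)ᵀ)_{il}; and H^{t+1}_{lj} = H^t_{lj} ((diag(W^{t+1}) S^{t+1})ᵀ X)_{lj} / ((diag(W^{t+1}) S^{t+1})ᵀ S^{t+1} H^t)_{lj}. Then F₄(W^{t+1}, S^{t+1}, H^{t+1}) ≤ F₄(W^t, S^t, H^t), where F₄(W, S, H) = Σ_{i,j} W_i (X_{ij} −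 (SH)_{ij})² + γ Σ_i W_i ln W_i. -/
open Finset

/-- Monotonicity of the multiplicative (Lee–Seung) least-squares update. -/
lemma mult_update_monotone {ι κ : Type*} [Fintype ι] [Fintype κ]
    (x : ι → ℝ) (B : κ → ι → ℝ) (hB : ∀ k i, 0 ≤ B k i)
    (v : κ → ℝ) (hv : ∀ k, 0 < v k) :
    ∑ i, (x i - ∑ k, (v k * (∑ i', B k i' * x i') /
        (∑ i', B k i' * ∑ m, v m * B m i')) * B k i) ^ 2
      ≤ ∑ i, (x i - ∑ k, v k * B k i) ^ 2 := by
  classical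
  set a : κ → ℝ := fun k => ∑ i', B k i' * x i' with ha
  set b : κ → ℝ := fun k => ∑ i', B k i' * ∑ m, v m * B m i' with hb
  set Q : κ → κ → ℝ := fun k m => ∑ i, B k i * B m i with hQ
  set v1 : κ → ℝ := fun k => v k * a k / b k with hv1
  set d : κ → ℝ := fun k => v1 k - v k with hd
  have hQnn : ∀ k m, 0 ≤ Q k m := fun k m =>
    Finset.sum_nonneg fun i _ => mul_nonneg (hB k i) (hB m i)
  have hQsymm : ∀ k m, Q k m = Q m k := fun k m =>
    Finset.sum_congr rfl fun i _ => mul_comm _ _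
  have hbQ : ∀ k, b k = ∑ m, Q k m * v m := by
    intro k
    simp only [hb, hQ, Finset.mul_sum, Finset.sum_mul]
    rw [Finset.sum_comm]
    exact Finset.sum_congr rfl fun m _ => Finset.sum_congr rfl fun i _ => by ring
  have hbnn : ∀ k, 0 ≤ b k := by
    intro k
    rw [hbQ k]
    exact Finset.sum_nonneg fun m _ => mul_nonneg (hQnn k m) (hv m).le
  -- if b k = 0 then row k of B is zero
  have hbzero : ∀ k, b k = 0 → ∀ i, B k i = 0 := by
    intro k hk i
    have h1 : ∀ i', 0 ≤ B k i' * ∑ m, v m * B m i' := fun i' =>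
      mul_nonneg (hB k i') (Finset.sum_nonneg fun m _ => mul_nonneg (hv m).le (hB m i'))
    have h2 : B k i * ∑ m, v m * B m i = 0 :=
      (Finset.sum_eq_zero_iff_of_nonneg (fun i' _ => h1 i')).mp hk i (Finset.mem_univ i)
    have h3 : B k i * (v k * B k i) ≤ B k i * ∑ m, v m * B m i := by
      apply mul_le_mul_of_nonneg_left _ (hB k i)
      exact Finset.single_le_sum (fun m _ => mul_nonneg (hv m).le (hB m i)) (Finset.mem_univ k)
    have h4 : B k i * (v k * B k i) ≤ 0 := h2 ▸ h3
    have h5 : B k i ^ 2 ≤ 0 := by nlinarith [hv k]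
    exact pow_eq_zero_iff two_ne_zero |>.mp (le_antisymm h5 (sq_nonneg _))
  -- the quadratic expansion
  have key : (∑ i, (x i - ∑ k, v1 k * B k i) ^ 2) - ∑ i, (x i - ∑ k, v k * B k i) ^ 2
      = (∑ k, ∑ m, Q k m * d k * d m) + ∑ k, 2 * (b k - a k) * d k := by
    have hsplit : ∀ i, (x i - ∑ k, v1 k * B k i) ^ 2 - (x i - ∑ k, v k * B k i) ^ 2
        = (∑ k, d k * B k i) ^ 2
          + 2 * (∑ k, d k * B k i) * ((∑ k, v k * B k i) - x i) := by
      intro i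
      have h : ∑ k, v1 k * B k i = (∑ k, v k * B k i) + ∑ k, d k * B k i := by
        rw [← Finset.sum_add_distrib]
        exact Finset.sum_congr rfl fun k _ => by simp only [hd]; ring
      rw [h]; ring
    rw [← Finset.sum_sub_distrib]
    simp only [hsplit]
    rw [Finset.sum_add_distrib]
    congr 1
    · calc ∑ i, (∑ k, d k * B k i) ^ 2
          = ∑ i, ∑ k, ∑ m, (d k * B k i) * (d m * B m i) := by
            refine Finset.sum_congr rfl fun i _ => ?_
            rw [sq, Finset.sum_mul_sum]
        _ = ∑ k, ∑ i, ∑ m, (d k * B k i) * (d m * B m i) := Finset.sum_comm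
        _ = ∑ k, ∑ m, ∑ i, (d k * B k i) * (d m * B m i) :=
            Finset.sum_congr rfl fun k _ => Finset.sum_comm
        _ = ∑ k, ∑ m, Q k m * d k * d m := by
            refine Finset.sum_congr rfl fun k _ => Finset.sum_congr rfl fun m _ => ?_
            simp only [hQ, Finset.sum_mul]
            exact Finset.sum_congr rfl fun i _ => by ring
    · calc ∑ i, 2 * (∑ k, d k * B k i) * ((∑ k, v k * B k i) - x i)
          = ∑ i, ∑ k, 2 * d k * (B k i * (∑ m, v m * B m i) - B k i * x i) := by
            refine Finset.sum_congr rfl fun i _ => ?_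
            rw [Finset.mul_sum, Finset.sum_mul]
            exact Finset.sum_congr rfl fun k _ => by ring
        _ = ∑ k, ∑ i, 2 * d k * (B k i * (∑ m, v m * B m i) - B k i * x i) := Finset.sum_comm
        _ = ∑ k, 2 * (b k - a k) * d k := by
            refine Finset.sum_congr rfl fun k _ => ?_
            rw [← Finset.mul_sum, Finset.sum_sub_distrib]
            simp only [hb, ha]
            ring
  -- the AM-GM quadratic bound
  have quad : ∑ k, ∑ m, Q k m * d k * d m ≤ ∑ k, b k / v k * d k ^ 2 := by
    have step : ∀ k m, Q k m * d k * d m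
        ≤ Q k m * (v m * d k ^ 2 / (2 * v k)) + Q k m * (v k * d m ^ 2 / (2 * v m)) := by
      intro k m
      have hvk := hv k
      have hvm := hv m
      have hineq : d k * d m ≤ v m * d k ^ 2 / (2 * v k) + v k * d m ^ 2 / (2 * v m) := by
        rw [div_add_div _ _ (by positivity) (by positivity), le_div_iff₀ (by positivity)]
        nlinarith [sq_nonneg (v m * d k - v k * d m), mul_pos hvk hvm]
      calc Q k m * d k * d m = Q k m * (d k * d m) := by ring
        _ ≤ Q k m * (v m * d k ^ 2 / (2 * v k) + v k * d m ^ 2 / (2 * v m)) :=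
            mul_le_mul_of_nonneg_left hineq (hQnn k m)
        _ = _ := by ring
    calc ∑ k, ∑ m, Q k m * d k * d m
        ≤ ∑ k, ∑ m, (Q k m * (v m * d k ^ 2 / (2 * v k)) + Q k m * (v k * d m ^ 2 / (2 * v m))) :=
          Finset.sum_le_sum fun k _ => Finset.sum_le_sum fun m _ => step k m
      _ = (∑ k, ∑ m, Q k m * (v m * d k ^ 2 / (2 * v k)))
          + ∑ k, ∑ m, Q k m * (v k * d m ^ 2 / (2 * v m)) := by
          rw [← Finset.sum_add_distrib]
          exact Finset.sum_congr rfl fun k _ => Finset.sum_add_distrib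
      _ = (∑ k, ∑ m, Q k m * (v m * d k ^ 2 / (2 * v k)))
          + ∑ k, ∑ m, Q k m * (v m * d k ^ 2 / (2 * v k)) := by
          congr 1
          rw [Finset.sum_comm]
          exact Finset.sum_congr rfl fun k _ => Finset.sum_congr rfl fun m _ => by
            rw [hQsymm]
      _ = ∑ k, b k / v k * d k ^ 2 := by
          rw [← Finset.sum_add_distrib]
          refine Finset.sum_congr rfl fun k _ => ?_
          have h1 : ∑ m, Q k m * (v m * d k ^ 2 / (2 * v k))
              = b k * (d k ^ 2 / (2 * v k)) := by
            rw [hbQ k, Finset.sum_mul]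
            exact Finset.sum_congr rfl fun m _ => by ring
          rw [h1]
          field_simp
          ring
  -- per-coordinate descent bound
  have perk : ∀ k, 2 * (b k - a k) * d k + b k / v k * d k ^ 2 ≤ 0 := by
    intro k
    by_cases hbk : b k = 0
    · have hak : a k = 0 := by
        simp only [ha]
        exact Finset.sum_eq_zero fun i _ => by rw [hbzero k hbk]; ring
      simp [hbk, hak]
    · have hbkpos : 0 < b k := lt_of_le_of_ne (hbnn k) (Ne.symm hbk)
      have hb' : b k ≠ 0 := hbk
      have hv' : v k ≠ 0 := ne_of_gt (hv k)
      have hdk : d k = v k * (a k - b k) / b k := by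
        simp only [hd, hv1]
        field_simp
      rw [hdk]
      have heq : 2 * (b k - a k) * (v k * (a k - b k) / b k)
          + b k / v k * (v k * (a k - b k) / b k) ^ 2
          = -(v k * (a k - b k) ^ 2 / b k) := by
        field_simp
        ring
      rw [heq]
      have : 0 ≤ v k * (a k - b k) ^ 2 / b k :=
        div_nonneg (mul_nonneg (hv k).le (sq_nonneg _)) (hbnn k)
      linarith
  have hsum : ∑ k, (2 * (b k - a k) * d k + b k / v k * d k ^ 2) ≤ 0 :=
    Finset.sum_nonpos fun k _ => perk k
  rw [Finset.sum_add_distrib] at hsum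
  linarith [key, quad, hsum]

open Finset Matrix Real

/-- One full ERWNMF iteration (closed-form softmax weight update Eq. (27), multiplicative
`S` update Eq. (28), weighted multiplicative `H` update Eq. (29)) does not increase the
ERWNMF objective
`F₄(W, S, H) = ∑ i j, W i * (X i j - (S * H) i j)² + γ * ∑ i, W i * log (W i)`. -/
theorem erwnmf_iteration_monotone {M N K : ℕ} (γ : ℝ) (hγ : 0 < γ)
    (X : Matrix (Fin M) (Fin N) ℝ) (hX : ∀ i j, 0 ≤ X i j)
    (Wt : Fin M → ℝ) (hWt : ∀ i, 0 < Wt i) (hWtsum : ∑ i, Wt i = 1)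
    (St : Matrix (Fin M) (Fin K) ℝ) (hSt : ∀ i l, 0 < St i l)
    (Ht : Matrix (Fin K) (Fin N) ℝ) (hHt : ∀ l j, 0 < Ht l j)
    (e : Fin M → ℝ) (he_def : ∀ i, e i = ∑ j, (X i j - (St * Ht) i j) ^ 2)
    (W1 : Fin M → ℝ)
    (hW1 : ∀ i, W1 i = Real.exp (-(e i) / γ) / ∑ l, Real.exp (-(e l) / γ))
    (S1 : Matrix (Fin M) (Fin K) ℝ)
    (hS1 : ∀ i l, S1 i l = St i l * (X * Htᵀ) i l / (St * Ht * Htᵀ) i l)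
    (H1 : Matrix (Fin K) (Fin N) ℝ)
    (hH1 : ∀ l j, H1 l j =
      Ht l j * ((Matrix.diagonal W1 * S1)ᵀ * X) l j /
        ((Matrix.diagonal W1 * S1)ᵀ * S1 * Ht) l j) :
    (∑ i, ∑ j, W1 i * (X i j - (S1 * H1) i j) ^ 2) + γ * ∑ i, W1 i * Real.log (W1 i) ≤
      (∑ i, ∑ j, Wt i * (X i j - (St * Ht) i j) ^ 2) +
        γ * ∑ i, Wt i * Real.log (Wt i) := by
  classical
  -- M is nonzero
  have hM : Nonempty (Fin M) := by
    rcases Nat.eq_zero_or_pos M with h | h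
    · subst h; simp at hWtsum
    · exact ⟨⟨0, h⟩⟩
  set Z : ℝ := ∑ l, Real.exp (-(e l) / γ) with hZ
  have hZpos : 0 < Z := Finset.sum_pos (fun l _ => Real.exp_pos _) Finset.univ_nonempty
  have hW1pos : ∀ i, 0 < W1 i := fun i => by
    rw [hW1]; exact div_pos (Real.exp_pos _) hZpos
  have hW1sum : ∑ i, W1 i = 1 := by
    simp only [hW1]
    rw [← Finset.sum_div]
    exact div_self (ne_of_gt hZpos)
  have hγ' : γ ≠ 0 := ne_of_gt hγ
  have hlogW1 : ∀ i, Real.log (W1 i) = -(e i) / γ - Real.log Z := fun i => by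
    rw [hW1 i, Real.log_div (Real.exp_ne_zero _) (ne_of_gt hZpos), Real.log_exp]
  -- Step W : softmax minimizes the entropy-regularized linear objective
  have lhsW : ∑ i, W1 i * e i + γ * ∑ i, W1 i * Real.log (W1 i) = -γ * Real.log Z := by
    rw [Finset.mul_sum, ← Finset.sum_add_distrib]
    have h1 : ∀ i, W1 i * e i + γ * (W1 i * Real.log (W1 i)) = -γ * Real.log Z * W1 i := by
      intro i; rw [hlogW1 i]; field_simp; ring
    rw [Finset.sum_congr rfl fun i _ => h1 i, ← Finset.mul_sum, hW1sum, mul_one]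
  have gibbs : ∑ i, Wt i * (Real.log (W1 i) - Real.log (Wt i)) ≤ 0 := by
    have hle : ∀ i, Wt i * (Real.log (W1 i) - Real.log (Wt i)) ≤ W1 i - Wt i := by
      intro i
      have h := Real.log_le_sub_one_of_pos (div_pos (hW1pos i) (hWt i))
      rw [Real.log_div (ne_of_gt (hW1pos i)) (ne_of_gt (hWt i))] at h
      have h2 := mul_le_mul_of_nonneg_left h (hWt i).le
      calc Wt i * (Real.log (W1 i) - Real.log (Wt i)) ≤ Wt i * (W1 i / Wt i - 1) := h2
        _ = W1 i - Wt i := by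
            have h0 : Wt i ≠ 0 := ne_of_gt (hWt i)
            field_simp
    calc ∑ i, Wt i * (Real.log (W1 i) - Real.log (Wt i)) ≤ ∑ i, (W1 i - Wt i) :=
          Finset.sum_le_sum fun i _ => hle i
      _ = 0 := by rw [Finset.sum_sub_distrib, hW1sum, hWtsum]; ring
  have rhsW : -γ * Real.log Z ≤ ∑ i, Wt i * e i + γ * ∑ i, Wt i * Real.log (Wt i) := by
    have h1 : ∀ i, Wt i * e i + γ * (Wt i * Real.log (Wt i))
        = -γ * Real.log Z * Wt i + (-γ) * (Wt i * (Real.log (W1 i) - Real.log (Wt i))) := by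
      intro i
      rw [hlogW1 i]
      field_simp
      ring
    have h2 : ∑ i, Wt i * e i + γ * ∑ i, Wt i * Real.log (Wt i)
        = -γ * Real.log Z + (-γ) * ∑ i, Wt i * (Real.log (W1 i) - Real.log (Wt i)) := by
      rw [Finset.mul_sum, ← Finset.sum_add_distrib,
        Finset.sum_congr rfl fun i _ => h1 i, Finset.sum_add_distrib,
        ← Finset.mul_sum, ← Finset.mul_sum, hWtsum, mul_one]
    rw [h2]
    have h3 : 0 ≤ (-γ) * ∑ i, Wt i * (Real.log (W1 i) - Real.log (Wt i)) := by
      rcases eq_or_lt_of_le gibbs with h | h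
      · rw [h]; ring_nf; exact le_refl _
      · nlinarith
    linarith
  have stepW : ∑ i, W1 i * e i + γ * ∑ i, W1 i * Real.log (W1 i)
      ≤ ∑ i, Wt i * e i + γ * ∑ i, Wt i * Real.log (Wt i) := lhsW ▸ rhsW
  -- nonnegativity of S1
  have hS1nn : ∀ i k, 0 ≤ S1 i k := by
    intro i k
    rw [hS1]
    apply div_nonneg
    · apply mul_nonneg (hSt i k).le
      rw [Matrix.mul_apply]
      exact Finset.sum_nonneg fun j _ => mul_nonneg (hX i j) (le_of_lt (by
        rw [Matrix.transpose_apply]; exact hHt k j))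
    · rw [Matrix.mul_apply]
      refine Finset.sum_nonneg fun j _ => mul_nonneg ?_ (le_of_lt (by
        rw [Matrix.transpose_apply]; exact hHt k j))
      rw [Matrix.mul_apply]
      exact Finset.sum_nonneg fun m _ => mul_nonneg (hSt i m).le (hHt m j).le
  -- Step S : per-row multiplicative update decreases the row residual
  have stepS : ∀ i, ∑ j, (X i j - (S1 * Ht) i j) ^ 2 ≤ ∑ j, (X i j - (St * Ht) i j) ^ 2 := by
    intro i
    have hmain := mult_update_monotone (x := fun j => X i j) (B := fun k j => Ht k j)
      (fun k j => (hHt k j).le) (v := fun k => St i k) (fun k => hSt i k)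
    have hS1' : ∀ k, S1 i k
        = St i k * (∑ j', Ht k j' * X i j') / (∑ j', Ht k j' * ∑ m, St i m * Ht m j') := by
      intro k
      rw [hS1]
      congr 1
      · congr 1
        rw [Matrix.mul_apply]
        exact Finset.sum_congr rfl fun j' _ => by rw [Matrix.transpose_apply]; ring
      · rw [Matrix.mul_apply]
        refine Finset.sum_congr rfl fun j' _ => ?_
        rw [Matrix.transpose_apply, Matrix.mul_apply]
        ring
    have hL : ∑ j, (X i j - (S1 * Ht) i j) ^ 2
        = ∑ j, (X i j - ∑ k, (St i k * (∑ j', Ht k j' * X i j') /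
            (∑ j', Ht k j' * ∑ m, St i m * Ht m j')) * Ht k j) ^ 2 := by
      refine Finset.sum_congr rfl fun j _ => ?_
      rw [Matrix.mul_apply]
      congr 2
      exact Finset.sum_congr rfl fun k _ => by rw [hS1' k]
    have hR : ∑ j, (X i j - (St * Ht) i j) ^ 2
        = ∑ j, (X i j - ∑ k, St i k * Ht k j) ^ 2 := by
      refine Finset.sum_congr rfl fun j _ => ?_
      rw [Matrix.mul_apply]
    rw [hL, hR]
    exact hmain
  -- Step H : per-column weighted multiplicative update decreases the weighted residual
  have hsq : ∀ i, Real.sqrt (W1 i) * Real.sqrt (W1 i) = W1 i :=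
    fun i => Real.mul_self_sqrt (hW1pos i).le
  have stepH : ∀ j, ∑ i, W1 i * (X i j - (S1 * H1) i j) ^ 2
      ≤ ∑ i, W1 i * (X i j - (S1 * Ht) i j) ^ 2 := by
    intro j
    have hmain := mult_update_monotone (x := fun i => Real.sqrt (W1 i) * X i j)
      (B := fun k i => Real.sqrt (W1 i) * S1 i k)
      (fun k i => mul_nonneg (Real.sqrt_nonneg _) (hS1nn i k))
      (v := fun k => Ht k j) (fun k => hHt k j)
    have hnum : ∀ k, ((Matrix.diagonal W1 * S1)ᵀ * X) k j
        = ∑ i', (Real.sqrt (W1 i') * S1 i' k) * (Real.sqrt (W1 i') * X i' j) := by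
      intro k
      rw [Matrix.mul_apply]
      refine Finset.sum_congr rfl fun i' _ => ?_
      rw [Matrix.transpose_apply, Matrix.diagonal_mul]
      rw [show Real.sqrt (W1 i') * S1 i' k * (Real.sqrt (W1 i') * X i' j)
          = (Real.sqrt (W1 i') * Real.sqrt (W1 i')) * S1 i' k * X i' j by ring, hsq i']
    have hden : ∀ k, ((Matrix.diagonal W1 * S1)ᵀ * S1 * Ht) k j
        = ∑ i', (Real.sqrt (W1 i') * S1 i' k) *
            ∑ m, Ht m j * (Real.sqrt (W1 i') * S1 i' m) := by
      intro k
      rw [Matrix.mul_apply]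
      have : ∀ m, ((Matrix.diagonal W1 * S1)ᵀ * S1) k m
          = ∑ i', W1 i' * S1 i' k * S1 i' m := by
        intro m
        rw [Matrix.mul_apply]
        refine Finset.sum_congr rfl fun i' _ => ?_
        rw [Matrix.transpose_apply, Matrix.diagonal_mul]
      rw [Finset.sum_congr rfl fun m _ => by rw [this m, Finset.sum_mul]]
      rw [Finset.sum_comm]
      refine Finset.sum_congr rfl fun i' _ => ?_
      rw [Finset.mul_sum]
      refine Finset.sum_congr rfl fun m _ => ?_
      rw [show Real.sqrt (W1 i') * S1 i' k * (Ht m j * (Real.sqrt (W1 i') * S1 i' m))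
          = (Real.sqrt (W1 i') * Real.sqrt (W1 i')) * S1 i' k * S1 i' m * Ht m j by ring,
        hsq i']
    have hH1j : ∀ k, H1 k j
        = Ht k j * (∑ i', (Real.sqrt (W1 i') * S1 i' k) * (Real.sqrt (W1 i') * X i' j)) /
          (∑ i', (Real.sqrt (W1 i') * S1 i' k) *
            ∑ m, Ht m j * (Real.sqrt (W1 i') * S1 i' m)) := by
      intro k
      rw [hH1, hnum, hden]
    have hL : ∑ i, W1 i * (X i j - (S1 * H1) i j) ^ 2
        = ∑ i, (Real.sqrt (W1 i) * X i j
            - ∑ k, (Ht k j * (∑ i', (Real.sqrt (W1 i') * S1 i' k) * (Real.sqrt (W1 i') * X i' j)) /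
                (∑ i', (Real.sqrt (W1 i') * S1 i' k) *
                  ∑ m, Ht m j * (Real.sqrt (W1 i') * S1 i' m))) *
              (Real.sqrt (W1 i) * S1 i k)) ^ 2 := by
      refine Finset.sum_congr rfl fun i _ => ?_
      rw [Finset.sum_congr rfl fun k (_ : k ∈ Finset.univ) => by rw [← hH1j k]]
      have h1 : ∑ k, H1 k j * (Real.sqrt (W1 i) * S1 i k)
          = Real.sqrt (W1 i) * (S1 * H1) i j := by
        rw [Matrix.mul_apply, Finset.mul_sum]
        exact Finset.sum_congr rfl fun k _ => by ring
      rw [h1, show Real.sqrt (W1 i) * X i j - Real.sqrt (W1 i) * (S1 * H1) i j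
          = Real.sqrt (W1 i) * (X i j - (S1 * H1) i j) by ring, mul_pow,
        Real.sq_sqrt (hW1pos i).le]
    have hR : ∑ i, W1 i * (X i j - (S1 * Ht) i j) ^ 2
        = ∑ i, (Real.sqrt (W1 i) * X i j
            - ∑ k, Ht k j * (Real.sqrt (W1 i) * S1 i k)) ^ 2 := by
      refine Finset.sum_congr rfl fun i _ => ?_
      have h1 : ∑ k, Ht k j * (Real.sqrt (W1 i) * S1 i k)
          = Real.sqrt (W1 i) * (S1 * Ht) i j := by
        rw [Matrix.mul_apply, Finset.mul_sum]
        exact Finset.sum_congr rfl fun k _ => by ring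
      rw [h1, show Real.sqrt (W1 i) * X i j - Real.sqrt (W1 i) * (S1 * Ht) i j
          = Real.sqrt (W1 i) * (X i j - (S1 * Ht) i j) by ring, mul_pow,
        Real.sq_sqrt (hW1pos i).le]
    rw [hL, hR]
    exact hmain
  -- Assemble the three steps
  have chain1 : ∑ i, ∑ j, W1 i * (X i j - (S1 * H1) i j) ^ 2
      ≤ ∑ i, W1 i * ∑ j, (X i j - (S1 * Ht) i j) ^ 2 := by
    calc ∑ i, ∑ j, W1 i * (X i j - (S1 * H1) i j) ^ 2
        = ∑ j, ∑ i, W1 i * (X i j - (S1 * H1) i j) ^ 2 := Finset.sum_comm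
      _ ≤ ∑ j, ∑ i, W1 i * (X i j - (S1 * Ht) i j) ^ 2 :=
          Finset.sum_le_sum fun j _ => stepH j
      _ = ∑ i, ∑ j, W1 i * (X i j - (S1 * Ht) i j) ^ 2 := Finset.sum_comm
      _ = ∑ i, W1 i * ∑ j, (X i j - (S1 * Ht) i j) ^ 2 :=
          Finset.sum_congr rfl fun i _ => (Finset.mul_sum _ _ _).symm
  have chain2 : ∑ i, W1 i * ∑ j, (X i j - (S1 * Ht) i j) ^ 2 ≤ ∑ i, W1 i * e i :=
    Finset.sum_le_sum fun i _ => by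
      rw [he_def i]
      exact mul_le_mul_of_nonneg_left (stepS i) (hW1pos i).le
  have chain3 : ∑ i, ∑ j, Wt i * (X i j - (St * Ht) i j) ^ 2 = ∑ i, Wt i * e i :=
    Finset.sum_congr rfl fun i _ => by rw [he_def i, Finset.mul_sum]
  rw [chain3]
  linarith [chain1, chain2, stepW]
end

section
/- Let X ∈ ℝ^{M×N} with all entries nonnegative, H ∈ ℝ^{K×N} with all entries positive, S^t ∈ ℝ^{M×K} with all entries positive, and let w : Fin M → ℝ with w_i > 0 for all i. Define ξ_{ijl} = S^t_{il} H_{lj} / (S^t H)_{ij} and f₂(S, S^t) = Σ_{i,j,l} w_i ξ_{ijl} (X_{ij} − S_{il} H_{lj}/ξ_{ijl})². Then the matrix S' with S'_{il} = S^t_{il} (X Hᵀ)_{il} / (S^t H Hᵀ)_{il} satisfies f₂(S', S^t) ≤ f₂(S, S^t) for every S ∈ ℝ^{M×K} with nonnegative entries; in particular, the minimizer of the weighted auxiliary function does not depend on the weights w. -/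
open Finset Matrix

/-- A weighted least-squares quadratic `s ↦ ∑ j, a j * (Y j - s * c j)^2` with positive
weights `a` and positive coefficients `c` is minimized at
`s' = (∑ j, a j * Y j * c j) / (∑ j, a j * c j ^ 2)`. -/
lemma quad_min_aux {n : ℕ} (a c Y : Fin n → ℝ) (ha : ∀ j, 0 < a j) (hc : ∀ j, 0 < c j)
    (s s' : ℝ) (hs' : s' = (∑ j, a j * Y j * c j) / (∑ j, a j * c j ^ 2)) :
    ∑ j, a j * (Y j - s' * c j) ^ 2 ≤ ∑ j, a j * (Y j - s * c j) ^ 2 := by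
  rcases Nat.eq_zero_or_pos n with hn | hn
  · subst hn; simp
  · set A := ∑ j, a j * c j ^ 2 with hA
    set B := ∑ j, a j * Y j * c j with hB
    have hApos : 0 < A := by
      apply Finset.sum_pos
      · intro j _; exact mul_pos (ha j) (pow_pos (hc j) 2)
      · exact Finset.univ_nonempty_iff.mpr ⟨⟨0, hn⟩⟩
    have hAne : A ≠ 0 := ne_of_gt hApos
    have key : ∀ t : ℝ, ∑ j, a j * (Y j - t * c j) ^ 2
        = (∑ j, a j * Y j ^ 2) - 2 * t * B + t ^ 2 * A := by
      intro t
      rw [hA, hB, Finset.mul_sum, Finset.mul_sum, ← Finset.sum_sub_distrib,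
        ← Finset.sum_add_distrib]
      exact Finset.sum_congr rfl fun j _ => by ring
    rw [key, key, hs']
    have h2 : (s * A - B) ^ 2 / A
        = (s ^ 2 * A - 2 * s * B) - ((B / A) ^ 2 * A - 2 * (B / A) * B) := by
      field_simp
      ring
    have h3 : 0 ≤ (s * A - B) ^ 2 / A := div_nonneg (sq_nonneg _) hApos.le
    rw [h2] at h3
    linarith

/-- The Lee–Seung multiplicative update `S' i l = Sᵗ i l * (X * Hᵀ) i l / (Sᵗ * H * Hᵀ) i l`
minimizes the weighted auxiliary function
`f₂(S, Sᵗ) = ∑ i j l, w i * ξ i j l * (X i j - S i l * H l j / ξ i j l)²`,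
with `ξ i j l = Sᵗ i l * H l j / (Sᵗ * H) i j`, over nonnegative matrices `S`;
in particular the minimizer does not depend on the positive weights `w`. -/
theorem weighted_auxiliary_minimizer_weight_independent {M N K : ℕ}
    (X : Matrix (Fin M) (Fin N) ℝ) (hX : ∀ i j, 0 ≤ X i j)
    (H : Matrix (Fin K) (Fin N) ℝ) (hH : ∀ l j, 0 < H l j)
    (St : Matrix (Fin M) (Fin K) ℝ) (hSt : ∀ i l, 0 < St i l)
    (w : Fin M → ℝ) (hw : ∀ i, 0 < w i)
    (S' : Matrix (Fin M) (Fin K) ℝ)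
    (hS' : ∀ i l, S' i l = St i l * (X * Hᵀ) i l / (St * H * Hᵀ) i l) :
    ∀ S : Matrix (Fin M) (Fin K) ℝ, (∀ i l, 0 ≤ S i l) →
      ∑ i, ∑ j, ∑ l, w i * (St i l * H l j / (St * H) i j) *
          (X i j - S' i l * H l j / (St i l * H l j / (St * H) i j)) ^ 2 ≤
        ∑ i, ∑ j, ∑ l, w i * (St i l * H l j / (St * H) i j) *
          (X i j - S i l * H l j / (St i l * H l j / (St * H) i j)) ^ 2 := by
  intro S hS
  rcases Nat.eq_zero_or_pos N with hN | hN
  · subst hN; simp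
  apply Finset.sum_le_sum
  intro i _
  rw [Finset.sum_comm, Finset.sum_comm (γ := Fin N)]
  apply Finset.sum_le_sum
  intro l _
  have hSH : ∀ j, 0 < (St * H) i j := by
    intro j
    rw [Matrix.mul_apply]
    exact Finset.sum_pos (fun k _ => mul_pos (hSt i k) (hH k j))
      (Finset.univ_nonempty_iff.mpr ⟨l⟩)
  set ξ : Fin N → ℝ := fun j => St i l * H l j / (St * H) i j with hξ
  have hξpos : ∀ j, 0 < ξ j := fun j =>
    div_pos (mul_pos (hSt i l) (hH l j)) (hSH j)
  have key := quad_min_aux (fun j => w i * ξ j) (fun j => H l j / ξ j) (fun j => X i j)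
    (fun j => mul_pos (hw i) (hξpos j)) (fun j => div_pos (hH l j) (hξpos j))
    (S i l) (S' i l) ?_
  · have goalEq : ∀ T : Matrix (Fin M) (Fin K) ℝ,
        ∑ j, w i * (St i l * H l j / (St * H) i j) *
            (X i j - T i l * H l j / (St i l * H l j / (St * H) i j)) ^ 2
          = ∑ j, (w i * ξ j) * (X i j - T i l * (H l j / ξ j)) ^ 2 := by
      intro T
      refine Finset.sum_congr rfl fun j _ => ?_
      simp only [hξ]
      ring
    rw [goalEq S', goalEq S]
    exact key
  · -- compute the minimizer
    have e1 : ∀ j, (w i * ξ j) * X i j * (H l j / ξ j) = w i * (X i j * H l j) := by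
      intro j
      have : ξ j ≠ 0 := ne_of_gt (hξpos j)
      field_simp
    have e2 : ∀ j, (w i * ξ j) * (H l j / ξ j) ^ 2
        = w i / St i l * ((St * H) i j * H l j) := by
      intro j
      rw [hξ]
      have h1 : (St * H) i j ≠ 0 := ne_of_gt (hSH j)
      have h2 : St i l ≠ 0 := ne_of_gt (hSt i l)
      have h3 : H l j ≠ 0 := ne_of_gt (hH l j)
      field_simp
    have eB : ∑ j, (w i * ξ j) * X i j * (H l j / ξ j) = w i * (X * Hᵀ) i l := by
      rw [Matrix.mul_apply, Finset.mul_sum]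
      exact Finset.sum_congr rfl fun j _ => by rw [e1 j, Matrix.transpose_apply]
    have eA : ∑ j, (w i * ξ j) * (H l j / ξ j) ^ 2
        = w i / St i l * (St * H * Hᵀ) i l := by
      rw [Matrix.mul_apply, Finset.mul_sum]
      exact Finset.sum_congr rfl fun j _ => by rw [e2 j, Matrix.transpose_apply]
    rw [hS' i l]
    show St i l * (X * Hᵀ) i l / (St * H * Hᵀ) i l
        = (∑ j, (w i * ξ j) * X i j * (H l j / ξ j))
          / (∑ j, (w i * ξ j) * (H l j / ξ j) ^ 2)
    rw [eB, eA]
    have hQ : 0 < (St * H * Hᵀ) i l := by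
      rw [Matrix.mul_apply]
      refine Finset.sum_pos (fun j _ => mul_pos (hSH j) ?_)
        (Finset.univ_nonempty_iff.mpr ⟨⟨0, hN⟩⟩)
      exact hH l j
    have h2 : St i l ≠ 0 := ne_of_gt (hSt i l)
    have h4 : w i ≠ 0 := ne_of_gt (hw i)
    field_simp
end
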